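/- Let W be the regular icosahedron given as the convex hull of the twelve points (0,±1,±(τ−1)), (±(τ−1),0,±1), (±1,±(τ−1),0) (so that (τ',0,1) = (1−τ,0,1) and (−τ',0,1) = (τ−1,0,1) are among its vertices), and let s := 10⁻³·(1,1,1). Then the F-type icosahedral model set Λ(0, s+W) is generic, i.e., ∂(s+W) ∩ L* = ∅. -/

import Mathlib

noncomputable section

open Set

/-- The golden ratio τ = (1+√5)/2. -/
def gold : ℝ := (1 + Real.sqrt 5) / 2

/-- Euclidean 3-space. -/
abbrev E3 := EuclideanSpace ℝ (Fin 3)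

/-- Membership in ℚ(τ) ⊂ ℝ. -/
def inQtau (x : ℝ) : Prop := ∃ p q : ℚ, x = (p : ℝ) + (q : ℝ) * gold

open Classical in
/-- The Galois conjugation on ℚ(τ) ⊂ ℝ, determined by √5 ↦ -√5, i.e. τ ↦ 1-τ
(extended by 0 outside ℚ(τ)). -/
def conjTau (x : ℝ) : ℝ :=
  if h : ∃ p q : ℚ, x = (p : ℝ) + (q : ℝ) * gold then
    ((Classical.choose h : ℚ) : ℝ) +
      ((Classical.choose (Classical.choose_spec h) : ℚ) : ℝ) * (1 - gold)
  else 0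

/-- The ring ℤ[τ] = ℤ ⊕ ℤτ ⊂ ℝ. -/
def Ztau : Set ℝ := {x | ∃ m n : ℤ, x = (m : ℝ) + (n : ℝ) * gold}

/-- The standard face-centred icosahedral module M_F. -/
def MF : Set E3 :=
  {v | ∃ a b c : ℝ, a ∈ Ztau ∧ b ∈ Ztau ∧ c ∈ Ztau ∧
    v = a • (WithLp.toLp 2 (![2, 0, 0] : Fin 3 → ℝ) : E3) + b • (WithLp.toLp 2 (![gold + 1, gold, 1] : Fin 3 → ℝ) : E3) + c • (WithLp.toLp 2 (![0, 0, 2] : Fin 3 → ℝ) : E3)}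

/-- L := (1/2)·M_F. -/
def Lset : Set E3 := {v | (2 : ℝ) • v ∈ MF}

/-- The star map: coordinatewise Galois conjugation. -/
def starMap (v : E3) : E3 := WithLp.toLp 2 (fun i => conjTau (v i) : Fin 3 → ℝ)

/-- A window: ∅ ≠ int W ⊆ W ⊆ cl(int W) with cl(int W) compact. -/
def IsWindow (W : Set E3) : Prop :=
  (interior W).Nonempty ∧ W ⊆ closure (interior W) ∧ IsCompact (closure (interior W))

/-- The F-type icosahedral model set Λ(t,W). -/
def modelSet (t : E3) (W : Set E3) : Set E3 :=
  {x | ∃ α ∈ Lset, starMap α ∈ W ∧ x = t + α}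

/-- Genericity of the window: ∂W ∩ L* = ∅. -/
def IsGeneric (W : Set E3) : Prop := frontier W ∩ (starMap '' Lset) = ∅

/-- The line through p in direction u. -/
def lineThrough (p u : E3) : Set E3 := {x | ∃ r : ℝ, x = p + r • u}

/-- An L-direction: a unit vector parallel to a nonzero element of L. -/
def IsLDir (u : E3) : Prop :=
  u ∈ Metric.sphere (0 : E3) 1 ∧ ∃ v ∈ Lset, v ≠ 0 ∧ ∃ c : ℝ, u = c • v

/-- An L^{(τ,0,1)}-direction: an L-direction orthogonal to (τ,0,1). -/
def IsLTauDir (u : E3) : Prop :=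
  IsLDir u ∧ gold * u 0 + u 2 = 0

/-- A set of pairwise non-parallel directions. -/
def PairwiseNonParallel (U : Set E3) : Prop :=
  U.Pairwise fun u v => ¬ ∃ c : ℝ, u = c • v

/-- Two finite sets have the same X-ray in direction u. -/
def XRayEq (F G : Set E3) (u : E3) : Prop :=
  ∀ p : E3, (F ∩ lineThrough p u).ncard = (G ∩ lineThrough p u).ncard

/-- C is a (finite) convex subset of Λ, i.e. C = conv(C) ∩ Λ. -/
def ConvexSubset (Λ C : Set E3) : Prop :=
  C.Finite ∧ C ⊆ Λ ∧ C = convexHull ℝ C ∩ Λ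

/-- A collection of finite sets is determined by the X-rays in the directions of U. -/
def DeterminedBy (𝒞 : Set (Set E3)) (U : Set E3) : Prop :=
  ∀ F₁ ∈ 𝒞, ∀ F₂ ∈ 𝒞, (∀ u ∈ U, XRayEq F₁ F₂ u) → F₁ = F₂


/-- The regular icosahedron window with (±τ',0,1) = (∓(τ-1),0,1) among its vertices. -/
def Wico : Set E3 :=
  convexHull ℝ
    {(WithLp.toLp 2 (![0, 1, gold - 1] : Fin 3 → ℝ) : E3), (WithLp.toLp 2 (![0, 1, -(gold - 1)] : Fin 3 → ℝ) : E3), (WithLp.toLp 2 (![0, -1, gold - 1] : Fin 3 → ℝ) : E3),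
     (WithLp.toLp 2 (![0, -1, -(gold - 1)] : Fin 3 → ℝ) : E3), (WithLp.toLp 2 (![gold - 1, 0, 1] : Fin 3 → ℝ) : E3), (WithLp.toLp 2 (![gold - 1, 0, -1] : Fin 3 → ℝ) : E3),
     (WithLp.toLp 2 (![-(gold - 1), 0, 1] : Fin 3 → ℝ) : E3), (WithLp.toLp 2 (![-(gold - 1), 0, -1] : Fin 3 → ℝ) : E3), (WithLp.toLp 2 (![1, gold - 1, 0] : Fin 3 → ℝ) : E3),
     (WithLp.toLp 2 (![1, -(gold - 1), 0] : Fin 3 → ℝ) : E3), (WithLp.toLp 2 (![-1, gold - 1, 0] : Fin 3 → ℝ) : E3), (WithLp.toLp 2 (![-1, -(gold - 1), 0] : Fin 3 → ℝ) : E3)}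

/-- The translation vector s = 10⁻³·(1,1,1). -/
def sVec : E3 := ((10 : ℝ)⁻¹ ^ 3) • (WithLp.toLp 2 (![1, 1, 1] : Fin 3 → ℝ) : E3)

lemma gold_sq' : gold ^ 2 = gold + 1 := by
  rw [show gold = Real.goldenRatio from rfl]; exact Real.goldenRatio_sq

lemma gold_irr : Irrational gold := Real.goldenRatio_irrational

lemma one_lt_gold' : 1 < gold := by
  rw [show gold = Real.goldenRatio from rfl]; exact Real.one_lt_goldenRatio

lemma gold_lt2 : gold < 2 := by
  have h5 : Real.sqrt 5 < 3 := by
    nlinarith [Real.sq_sqrt (by norm_num : (5:ℝ) ≥ 0), Real.sqrt_nonneg 5]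
  rw [gold]; linarith

lemma gold_rat_inj {p q p' q' : ℚ} (h : (p:ℝ) + (q:ℝ)*gold = (p':ℝ) + (q':ℝ)*gold) :
    p = p' ∧ q = q' := by
  by_cases hq : q = q'
  · subst hq
    have : (p:ℝ) = (p':ℝ) := by linarith
    exact ⟨by exact_mod_cast this, rfl⟩
  · exfalso
    have hq' : ((q':ℝ) - q) ≠ 0 := by
      intro hc
      apply hq
      have : (q:ℝ) = q' := by linarith
      exact_mod_cast this
    have hg : gold = (((p - p')/(q' - q) : ℚ) : ℝ) := by
      push_cast
      field_simp
      linarith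
    exact gold_irr ⟨_, hg.symm⟩

lemma conjTau_eval (p q : ℚ) : conjTau ((p:ℝ) + (q:ℝ)*gold) = (p:ℝ) + (q:ℝ)*(1-gold) := by
  have hex : ∃ p' q' : ℚ, (p:ℝ) + (q:ℝ)*gold = (p':ℝ) + (q':ℝ)*gold := ⟨p, q, rfl⟩
  rw [conjTau, dif_pos hex]
  have hspec := Classical.choose_spec (Classical.choose_spec hex)
  obtain ⟨h1, h2⟩ := gold_rat_inj hspec.symm
  have e1 : ((Classical.choose hex : ℚ) : ℝ) = (p:ℝ) := by
    exact_mod_cast congrArg (fun r : ℚ => (r:ℝ)) h1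
  have e2 : ((Classical.choose (Classical.choose_spec hex) : ℚ) : ℝ) = (q:ℝ) := by
    exact_mod_cast congrArg (fun r : ℚ => (r:ℝ)) h2
  linear_combination e1 + (1 - gold) * e2

lemma key (A B k l : ℤ) (hk : k ≠ 0) (h3 : k.natAbs ≤ 3)
    (h : (A:ℝ)/2 + (B:ℝ)/2 * gold = gold + ((k:ℝ) + (l:ℝ)*gold)/1000) : False := by
  by_cases hc : (1 + (l:ℚ)/1000 - (B:ℚ)/2 : ℚ) = 0
  · have hcr : (1:ℝ) + (l:ℝ)/1000 - (B:ℝ)/2 = 0 := by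
      have h0 : ((1 + (l:ℚ)/1000 - (B:ℚ)/2 : ℚ) : ℝ) = ((0:ℚ):ℝ) := by rw [hc]
      push_cast at h0
      linarith
    have hA : (A:ℝ)/2 = (k:ℝ)/1000 := by linarith [h, mul_eq_zero_of_left hcr gold]
    have h5 : (500 * A : ℝ) = (k:ℝ) := by linarith
    have hZ : 500 * A = k := by exact_mod_cast h5
    omega
  · apply gold_irr
    have hc0 : (1:ℝ) + (l:ℝ)/1000 - (B:ℝ)/2 ≠ 0 := by
      intro hzero
      apply hc
      have h0 : ((1 + (l:ℚ)/1000 - (B:ℚ)/2 : ℚ) : ℝ) = 0 := by push_cast; linarith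
      exact_mod_cast h0
    refine ⟨((A:ℚ)/2 - (k:ℚ)/1000)/(1 + (l:ℚ)/1000 - (B:ℚ)/2), ?_⟩
    have hcast : ((((A:ℚ)/2 - (k:ℚ)/1000)/(1 + (l:ℚ)/1000 - (B:ℚ)/2) : ℚ) : ℝ)
        = ((A:ℝ)/2 - (k:ℝ)/1000)/((1:ℝ) + (l:ℝ)/1000 - (B:ℝ)/2) := by push_cast; ring
    rw [hcast, div_eq_iff hc0]
    linarith [h]

def verts : Fin 12 → E3 :=
  ![(WithLp.toLp 2 (![0, 1, gold - 1] : Fin 3 → ℝ) : E3), (WithLp.toLp 2 (![0, 1, -(gold - 1)] : Fin 3 → ℝ) : E3), (WithLp.toLp 2 (![0, -1, gold - 1] : Fin 3 → ℝ) : E3),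
    (WithLp.toLp 2 (![0, -1, -(gold - 1)] : Fin 3 → ℝ) : E3), (WithLp.toLp 2 (![gold - 1, 0, 1] : Fin 3 → ℝ) : E3), (WithLp.toLp 2 (![gold - 1, 0, -1] : Fin 3 → ℝ) : E3),
    (WithLp.toLp 2 (![-(gold - 1), 0, 1] : Fin 3 → ℝ) : E3), (WithLp.toLp 2 (![-(gold - 1), 0, -1] : Fin 3 → ℝ) : E3), (WithLp.toLp 2 (![1, gold - 1, 0] : Fin 3 → ℝ) : E3),
    (WithLp.toLp 2 (![1, -(gold - 1), 0] : Fin 3 → ℝ) : E3), (WithLp.toLp 2 (![-1, gold - 1, 0] : Fin 3 → ℝ) : E3), (WithLp.toLp 2 (![-1, -(gold - 1), 0] : Fin 3 → ℝ) : E3)]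

def dot3 (a b : E3) : ℝ := a 0 * b 0 + a 1 * b 1 + a 2 * b 2

lemma dot3_inner (n y : E3) : dot3 n y = (innerSL ℝ n) y := by
  simp only [innerSL_apply_apply, PiLp.inner_apply, RCLike.inner_apply, conj_trivial,
    Fin.sum_univ_three, dot3]
  ring

lemma hWico : Wico = convexHull ℝ (Set.range verts) := by
  rw [Wico, verts]
  congr 1
  ext x
  simp only [Matrix.range_cons, Matrix.range_empty, Set.singleton_union, Set.union_empty,
    Set.mem_insert_iff, Set.mem_singleton_iff]
  try tauto

lemma hconv : Convex ℝ Wico := convex_convexHull ℝ _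

lemma aff_top : affineSpan ℝ (Set.range verts) = ⊤ := by
  rw [AffineSubspace.affineSpan_eq_top_iff_vectorSpan_eq_top_of_nonempty ℝ E3 E3
    ⟨verts 0, Set.mem_range_self 0⟩]
  rw [eq_top_iff]
  intro x _
  have h0 : verts 8 - verts 10 ∈ vectorSpan ℝ (Set.range verts) :=
    vsub_mem_vectorSpan ℝ ⟨8, rfl⟩ ⟨10, rfl⟩
  have h1 : verts 0 - verts 2 ∈ vectorSpan ℝ (Set.range verts) :=
    vsub_mem_vectorSpan ℝ ⟨0, rfl⟩ ⟨2, rfl⟩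
  have h2 : verts 0 - verts 1 ∈ vectorSpan ℝ (Set.range verts) :=
    vsub_mem_vectorSpan ℝ ⟨0, rfl⟩ ⟨1, rfl⟩
  have hg : gold - 1 ≠ 0 := by have := one_lt_gold'; linarith
  have hx : x = (x 0 / 2) • (verts 8 - verts 10) + (x 1 / 2) • (verts 0 - verts 2)
      + (x 2 / (2 * (gold - 1))) • (verts 0 - verts 1) := by
    ext j
    fin_cases j
    · show x 0 = x 0 / 2 * (1 - -1) + x 1 / 2 * (0 - 0) + x 2 / (2 * (gold - 1)) * (0 - 0)
      ring
    · show x 1 = x 0 / 2 * ((gold - 1) - (gold - 1)) + x 1 / 2 * (1 - -1)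
        + x 2 / (2 * (gold - 1)) * (1 - 1)
      ring
    · show x 2 = x 0 / 2 * (0 - 0) + x 1 / 2 * ((gold -1) - (gold -1))
        + x 2 / (2 * (gold - 1)) * ((gold - 1) - -(gold - 1))
      have h : (gold - 1) - -(gold - 1) = 2 * (gold - 1) := by ring
      have h2 : (2 : ℝ) * (gold - 1) ≠ 0 := by
        intro hc; apply hg; linarith
      rw [h, div_mul_cancel₀ _ h2]
      ring
  rw [hx]
  exact Submodule.add_mem _ (Submodule.add_mem _ (Submodule.smul_mem _ _ h0)
    (Submodule.smul_mem _ _ h1)) (Submodule.smul_mem _ _ h2)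

def negIdx : Fin 12 → Fin 12 := ![3, 2, 1, 0, 7, 6, 5, 4, 11, 10, 9, 8]

lemma verts_neg : ∀ i, verts (negIdx i) = -verts i := by
  intro i
  fin_cases i <;> (ext j; fin_cases j) <;>
    (first
      | (show (0:ℝ) = -(0:ℝ); ring) | (show (1:ℝ) = -(-1:ℝ); ring) | (show (-1:ℝ) = -(1:ℝ); ring)
      | (show gold - 1 = -(-(gold-1)); ring) | (show -(gold - 1) = -(gold-1); ring))

lemma neg_Wico : -Wico = Wico := by
  rw [hWico, ← convexHull_neg]
  congr 1
  ext y
  simp only [Set.mem_neg, Set.mem_range]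
  constructor
  · rintro ⟨i, hi⟩
    exact ⟨negIdx i, by rw [verts_neg, hi, neg_neg]⟩
  · rintro ⟨i, rfl⟩
    exact ⟨negIdx i, verts_neg i⟩

lemma zero_interior : (0 : E3) ∈ interior Wico := by
  have hne : (interior Wico).Nonempty := by
    rw [hWico]
    exact interior_convexHull_nonempty_iff_affineSpan_eq_top.mpr aff_top
  obtain ⟨y, hy⟩ := hne
  have hny : -y ∈ interior Wico := by
    have h1 : (Homeomorph.neg E3) '' interior Wico = interior ((Homeomorph.neg E3) '' Wico) :=
      (Homeomorph.neg E3).image_interior Wico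
    have h2 : (Homeomorph.neg E3) '' Wico = -Wico := by
      ext z
      constructor
      · rintro ⟨w, hw, rfl⟩
        simpa [Set.mem_neg] using hw
      · intro hz
        exact ⟨-z, by simpa [Set.mem_neg] using hz, by simp [Homeomorph.neg, Equiv.neg]⟩
    rw [h2, neg_Wico] at h1
    rw [← h1]
    exact ⟨y, hy, rfl⟩
  have h0 : (0 : E3) = (1/2 : ℝ) • y + (1/2 : ℝ) • (-y) := by
    rw [smul_neg]; abel
  rw [h0]
  exact hconv.interior hy hny (by norm_num) (by norm_num) (by norm_num)

lemma hle_aux (f : E3 →L[ℝ] ℝ) (c : ℝ) (hf : ∀ a ∈ interior Wico, f a < c) :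
    ∀ y ∈ Wico, f y ≤ c := by
  intro y hy
  have hev : ∀ t : ℝ, t ∈ Set.Ioo (0:ℝ) 1 → (1 - t) * f y < c := by
    intro t ht
    have hmem := hconv.combo_interior_closure_mem_interior zero_interior (subset_closure hy)
      ht.1 (by linarith [ht.2] : (0:ℝ) ≤ 1 - t) (by ring)
    have hlt := hf _ hmem
    have hval : f (t • (0:E3) + (1 - t) • y) = (1 - t) * f y := by
      rw [map_add, map_smul, map_smul, map_zero]
      show t • (0:ℝ) + (1 - t) • f y = _
      simp [smul_eq_mul]
    rw [hval] at hlt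
    exact hlt
  have hmc : (0:ℝ) ∈ closure (Set.Ioo (0:ℝ) 1) := by
    rw [closure_Ioo (by norm_num : (0:ℝ) ≠ 1)]
    exact ⟨le_refl 0, by norm_num⟩
  haveI := mem_closure_iff_nhdsWithin_neBot.mp hmc
  have htend : Filter.Tendsto (fun t : ℝ => (1 - t) * f y)
      (nhdsWithin 0 (Set.Ioo 0 1)) (nhds (f y)) := by
    have h2 : Filter.Tendsto (fun t : ℝ => (1 - t) * f y) (nhds 0) (nhds ((1 - 0) * f y)) :=
      Filter.Tendsto.mul_const _ ((continuous_const.sub continuous_id).tendsto 0)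
    simpa using h2.mono_left nhdsWithin_le_nhds
  exact le_of_tendsto htend (Filter.eventually_of_mem self_mem_nhdsWithin
    fun t ht => (hev t ht).le)

def adjMat : Fin 12 → Fin 12 → Bool :=
  ![![false, true, false, false, true, false, true, false, true, false, true, false],
    ![true, false, false, false, false, true, false, true, true, false, true, false],
    ![false, false, false, true, true, false, true, false, false, true, false, true],
    ![false, false, true, false, false, true, false, true, false, true, false, true],
    ![true, false, true, false, false, false, true, false, true, true, false, false],
    ![false, true, false, true, false, false, false, true, true, true, false, false],
    ![true, false, true, false, true, false, false, false, false, false, true, true],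
    ![false, true, false, true, false, true, false, false, false, false, true, true],
    ![true, true, false, false, true, true, false, false, false, true, false, false],
    ![false, false, true, true, true, true, false, false, true, false, false, false],
    ![true, true, false, false, false, false, true, true, false, false, false, true],
    ![false, false, true, true, false, false, true, true, false, false, true, false]]

def faceSet : Fin 20 → Finset (Fin 12) :=
  ![{0,1,8}, {0,1,10}, {0,4,6}, {0,4,8}, {0,6,10}, {1,5,7}, {1,5,8}, {1,7,10}, {2,3,9}, {2,3,11}, {2,4,6}, {2,4,9}, {2,6,11}, {3,5,7}, {3,5,9}, {3,7,11}, {4,8,9}, {5,8,9}, {6,10,11}, {7,10,11}]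

def nrm : Fin 20 → E3 :=
  ![WithLp.toLp 2 ![(-1 + (1)*gold), (0 + (1)*gold), (0 + (0)*gold)], WithLp.toLp 2 ![(1 + (-1)*gold), (0 + (1)*gold), (0 + (0)*gold)], WithLp.toLp 2 ![(0 + (0)*gold), (-1 + (1)*gold), (0 + (1)*gold)], WithLp.toLp 2 ![(1 + (0)*gold), (1 + (0)*gold), (1 + (0)*gold)], WithLp.toLp 2 ![(-1 + (0)*gold), (1 + (0)*gold), (1 + (0)*gold)], WithLp.toLp 2 ![(0 + (0)*gold), (-1 + (1)*gold), (0 + (-1)*gold)], WithLp.toLp 2 ![(1 + (0)*gold), (1 + (0)*gold), (-1 + (0)*gold)], WithLp.toLp 2 ![(-1 + (0)*gold), (1 + (0)*gold), (-1 + (0)*gold)], WithLp.toLp 2 ![(-1 + (1)*gold), (0 + (-1)*gold), (0 + (0)*gold)], WithLp.toLp 2 ![(1 + (-1)*gold), (0 + (-1)*gold), (0 + (0)*gold)], WithLp.toLp 2 ![(0 + (0)*gold), (1 + (-1)*gold), (0 + (1)*gold)], WithLp.toLp 2 ![(1 + (0)*gold), (-1 + (0)*gold), (1 + (0)*gold)],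 WithLp.toLp 2 ![(-1 + (0)*gold), (-1 + (0)*gold), (1 + (0)*gold)], WithLp.toLp 2 ![(0 + (0)*gold), (1 + (-1)*gold), (0 + (-1)*gold)], WithLp.toLp 2 ![(1 + (0)*gold), (-1 + (0)*gold), (-1 + (0)*gold)], WithLp.toLp 2 ![(-1 + (0)*gold), (-1 + (0)*gold), (-1 + (0)*gold)], WithLp.toLp 2 ![(0 + (1)*gold), (0 + (0)*gold), (-1 + (1)*gold)], WithLp.toLp 2 ![(0 + (1)*gold), (0 + (0)*gold), (1 + (-1)*gold)], WithLp.toLp 2 ![(0 + (-1)*gold), (0 + (0)*gold), (-1 + (1)*gold)], WithLp.toLp 2 ![(0 + (-1)*gold), (0 + (0)*gold), (1 + (-1)*gold)]]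

set_option maxRecDepth 40000 in
lemma face_d1 : ∀ a : Fin 12, ∃ t : Fin 20, a ∈ faceSet t := by decide

set_option maxRecDepth 40000 in
lemma face_d2 : ∀ a b : Fin 12, adjMat a b = true → ∃ t : Fin 20, a ∈ faceSet t ∧ b ∈ faceSet t := by
  decide

set_option maxRecDepth 40000 in
lemma face_d3 : ∀ a b c : Fin 12, adjMat a b = true → adjMat a c = true → adjMat b c = true →
    ∃ t : Fin 20, a ∈ faceSet t ∧ b ∈ faceSet t ∧ c ∈ faceSet t := by decide

set_option maxRecDepth 40000 in
lemma face_d4 : ∀ a b c d : Fin 12, a ≠ b → a ≠ c → a ≠ d → b ≠ c → b ≠ d → c ≠ d →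
    adjMat a b = true → adjMat a c = true → adjMat a d = true → adjMat b c = true →
    adjMat b d = true → adjMat c d = true → False := by decide

lemma clique_face (P : Fin 12 → Prop) (hne : ∃ i, P i)
    (hcl : ∀ i j, P i → P j → i ≠ j → adjMat i j = true) :
    ∃ t : Fin 20, ∀ i, P i → i ∈ faceSet t := by
  classical
  obtain ⟨a, ha⟩ := hne
  by_cases h2 : ∃ b, P b ∧ b ≠ a
  · obtain ⟨b, hb, hba⟩ := h2
    by_cases h3 : ∃ c, P c ∧ c ≠ a ∧ c ≠ b
    · obtain ⟨c, hc, hca, hcb⟩ := h3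
      obtain ⟨t, hta, htb, htc⟩ := face_d3 a b c (hcl a b ha hb (Ne.symm hba))
        (hcl a c ha hc (Ne.symm hca)) (hcl b c hb hc (Ne.symm hcb))
      refine ⟨t, fun d hd => ?_⟩
      by_cases hda : d = a
      · exact hda ▸ hta
      by_cases hdb : d = b
      · exact hdb ▸ htb
      by_cases hdc : d = c
      · exact hdc ▸ htc
      exact (face_d4 a b c d (Ne.symm hba) (Ne.symm hca) (fun h => hda h.symm)
        (Ne.symm hcb) (fun h => hdb h.symm) (fun h => hdc h.symm)
        (hcl a b ha hb (Ne.symm hba)) (hcl a c ha hc (Ne.symm hca))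
        (hcl a d ha hd (fun h => hda h.symm)) (hcl b c hb hc (Ne.symm hcb))
        (hcl b d hb hd (fun h => hdb h.symm)) (hcl c d hc hd (fun h => hdc h.symm))).elim
    · obtain ⟨t, hta, htb⟩ := face_d2 a b (hcl a b ha hb (Ne.symm hba))
      refine ⟨t, fun d hd => ?_⟩
      by_cases hda : d = a
      · exact hda ▸ hta
      by_cases hdb : d = b
      · exact hdb ▸ htb
      exact absurd ⟨d, hd, hda, hdb⟩ h3
  · obtain ⟨t, hta⟩ := face_d1 a
    refine ⟨t, fun d hd => ?_⟩
    by_cases hda : d = a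
    · exact hda ▸ hta
    · exact absurd ⟨d, hd, hda⟩ h2

lemma nonadj_rep : ∀ i j : Fin 12, i ≠ j → adjMat i j = false →
    (verts i + verts j = 0) ∨ ∃ k l : Fin 12, verts i + verts j = (gold - 1) • (verts k + verts l) := by
  intro i j hne hadj
  fin_cases i <;> fin_cases j
  · exact absurd rfl hne
  · exact absurd hadj (by decide)
  · refine Or.inr ⟨4, 6, ?_⟩
    ext r
    fin_cases r
    · show (0 : ℝ) + (0) = (gold - 1) * ((gold - 1) + (-(gold - 1)))
      ring
    · show (1 : ℝ) + (-1) = (gold - 1) * ((0) + (0))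
      ring
    · show (gold - 1 : ℝ) + (gold - 1) = (gold - 1) * ((1) + (1))
      ring
  · refine Or.inl ?_
    ext r
    fin_cases r
    · show (0 : ℝ) + (0) = 0
      ring
    · show (1 : ℝ) + (-1) = 0
      ring
    · show (gold - 1 : ℝ) + (-(gold - 1)) = 0
      ring
  · exact absurd hadj (by decide)
  · refine Or.inr ⟨1, 8, ?_⟩
    ext r
    fin_cases r
    · show (0 : ℝ) + (gold - 1) = (gold - 1) * ((0) + (1))
      ring
    · show (1 : ℝ) + (0) = (gold - 1) * ((1) + (gold - 1))
      linear_combination (-1 : ℝ) * gold_sq'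
    · show (gold - 1 : ℝ) + (-1) = (gold - 1) * ((-(gold - 1)) + (0))
      linear_combination (1 : ℝ) * gold_sq'
  · exact absurd hadj (by decide)
  · refine Or.inr ⟨1, 10, ?_⟩
    ext r
    fin_cases r
    · show (0 : ℝ) + (-(gold - 1)) = (gold - 1) * ((0) + (-1))
      ring
    · show (1 : ℝ) + (0) = (gold - 1) * ((1) + (gold - 1))
      linear_combination (-1 : ℝ) * gold_sq'
    · show (gold - 1 : ℝ) + (-1) = (gold - 1) * ((-(gold - 1)) + (0))
      linear_combination (1 : ℝ) * gold_sq'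
  · exact absurd hadj (by decide)
  · refine Or.inr ⟨4, 8, ?_⟩
    ext r
    fin_cases r
    · show (0 : ℝ) + (1) = (gold - 1) * ((gold - 1) + (1))
      linear_combination (-1 : ℝ) * gold_sq'
    · show (1 : ℝ) + (-(gold - 1)) = (gold - 1) * ((0) + (gold - 1))
      linear_combination (-1 : ℝ) * gold_sq'
    · show (gold - 1 : ℝ) + (0) = (gold - 1) * ((1) + (0))
      ring
  · exact absurd hadj (by decide)
  · refine Or.inr ⟨6, 10, ?_⟩
    ext r
    fin_cases r
    · show (0 : ℝ) + (-1) = (gold - 1) * ((-(gold - 1)) + (-1))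
      linear_combination (1 : ℝ) * gold_sq'
    · show (1 : ℝ) + (-(gold - 1)) = (gold - 1) * ((0) + (gold - 1))
      linear_combination (-1 : ℝ) * gold_sq'
    · show (gold - 1 : ℝ) + (0) = (gold - 1) * ((1) + (0))
      ring
  · exact absurd hadj (by decide)
  · exact absurd rfl hne
  · refine Or.inl ?_
    ext r
    fin_cases r
    · show (0 : ℝ) + (0) = 0
      ring
    · show (1 : ℝ) + (-1) = 0
      ring
    · show (-(gold - 1) : ℝ) + (gold - 1) = 0
      ring
  · refine Or.inr ⟨5, 7, ?_⟩
    ext r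
    fin_cases r
    · show (0 : ℝ) + (0) = (gold - 1) * ((gold - 1) + (-(gold - 1)))
      ring
    · show (1 : ℝ) + (-1) = (gold - 1) * ((0) + (0))
      ring
    · show (-(gold - 1) : ℝ) + (-(gold - 1)) = (gold - 1) * ((-1) + (-1))
      ring
  · refine Or.inr ⟨0, 8, ?_⟩
    ext r
    fin_cases r
    · show (0 : ℝ) + (gold - 1) = (gold - 1) * ((0) + (1))
      ring
    · show (1 : ℝ) + (0) = (gold - 1) * ((1) + (gold - 1))
      linear_combination (-1 : ℝ) * gold_sq'
    · show (-(gold - 1) : ℝ) + (1) = (gold - 1) * ((gold - 1) + (0))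
      linear_combination (-1 : ℝ) * gold_sq'
  · exact absurd hadj (by decide)
  · refine Or.inr ⟨0, 10, ?_⟩
    ext r
    fin_cases r
    · show (0 : ℝ) + (-(gold - 1)) = (gold - 1) * ((0) + (-1))
      ring
    · show (1 : ℝ) + (0) = (gold - 1) * ((1) + (gold - 1))
      linear_combination (-1 : ℝ) * gold_sq'
    · show (-(gold - 1) : ℝ) + (1) = (gold - 1) * ((gold - 1) + (0))
      linear_combination (-1 : ℝ) * gold_sq'
  · exact absurd hadj (by decide)
  · exact absurd hadj (by decide)
  · refine Or.inr ⟨5, 8, ?_⟩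
    ext r
    fin_cases r
    · show (0 : ℝ) + (1) = (gold - 1) * ((gold - 1) + (1))
      linear_combination (-1 : ℝ) * gold_sq'
    · show (1 : ℝ) + (-(gold - 1)) = (gold - 1) * ((0) + (gold - 1))
      linear_combination (-1 : ℝ) * gold_sq'
    · show (-(gold - 1) : ℝ) + (0) = (gold - 1) * ((-1) + (0))
      ring
  · exact absurd hadj (by decide)
  · refine Or.inr ⟨7, 10, ?_⟩
    ext r
    fin_cases r
    · show (0 : ℝ) + (-1) = (gold - 1) * ((-(gold - 1)) + (-1))
      linear_combination (1 : ℝ) * gold_sq'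
    · show (1 : ℝ) + (-(gold - 1)) = (gold - 1) * ((0) + (gold - 1))
      linear_combination (-1 : ℝ) * gold_sq'
    · show (-(gold - 1) : ℝ) + (0) = (gold - 1) * ((-1) + (0))
      ring
  · refine Or.inr ⟨4, 6, ?_⟩
    ext r
    fin_cases r
    · show (0 : ℝ) + (0) = (gold - 1) * ((gold - 1) + (-(gold - 1)))
      ring
    · show (-1 : ℝ) + (1) = (gold - 1) * ((0) + (0))
      ring
    · show (gold - 1 : ℝ) + (gold - 1) = (gold - 1) * ((1) + (1))
      ring
  · refine Or.inl ?_
    ext r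
    fin_cases r
    · show (0 : ℝ) + (0) = 0
      ring
    · show (-1 : ℝ) + (1) = 0
      ring
    · show (gold - 1 : ℝ) + (-(gold - 1)) = 0
      ring
  · exact absurd rfl hne
  · exact absurd hadj (by decide)
  · exact absurd hadj (by decide)
  · refine Or.inr ⟨3, 9, ?_⟩
    ext r
    fin_cases r
    · show (0 : ℝ) + (gold - 1) = (gold - 1) * ((0) + (1))
      ring
    · show (-1 : ℝ) + (0) = (gold - 1) * ((-1) + (-(gold - 1)))
      linear_combination (1 : ℝ) * gold_sq'
    · show (gold - 1 : ℝ) + (-1) = (gold - 1) * ((-(gold - 1)) + (0))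
      linear_combination (1 : ℝ) * gold_sq'
  · exact absurd hadj (by decide)
  · refine Or.inr ⟨3, 11, ?_⟩
    ext r
    fin_cases r
    · show (0 : ℝ) + (-(gold - 1)) = (gold - 1) * ((0) + (-1))
      ring
    · show (-1 : ℝ) + (0) = (gold - 1) * ((-1) + (-(gold - 1)))
      linear_combination (1 : ℝ) * gold_sq'
    · show (gold - 1 : ℝ) + (-1) = (gold - 1) * ((-(gold - 1)) + (0))
      linear_combination (1 : ℝ) * gold_sq'
  · refine Or.inr ⟨4, 9, ?_⟩
    ext r
    fin_cases r
    · show (0 : ℝ) + (1) = (gold - 1) * ((gold - 1) + (1))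
      linear_combination (-1 : ℝ) * gold_sq'
    · show (-1 : ℝ) + (gold - 1) = (gold - 1) * ((0) + (-(gold - 1)))
      linear_combination (1 : ℝ) * gold_sq'
    · show (gold - 1 : ℝ) + (0) = (gold - 1) * ((1) + (0))
      ring
  · exact absurd hadj (by decide)
  · refine Or.inr ⟨6, 11, ?_⟩
    ext r
    fin_cases r
    · show (0 : ℝ) + (-1) = (gold - 1) * ((-(gold - 1)) + (-1))
      linear_combination (1 : ℝ) * gold_sq'
    · show (-1 : ℝ) + (gold - 1) = (gold - 1) * ((0) + (-(gold - 1)))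
      linear_combination (1 : ℝ) * gold_sq'
    · show (gold - 1 : ℝ) + (0) = (gold - 1) * ((1) + (0))
      ring
  · exact absurd hadj (by decide)
  · refine Or.inl ?_
    ext r
    fin_cases r
    · show (0 : ℝ) + (0) = 0
      ring
    · show (-1 : ℝ) + (1) = 0
      ring
    · show (-(gold - 1) : ℝ) + (gold - 1) = 0
      ring
  · refine Or.inr ⟨5, 7, ?_⟩
    ext r
    fin_cases r
    · show (0 : ℝ) + (0) = (gold - 1) * ((gold - 1) + (-(gold - 1)))
      ring
    · show (-1 : ℝ) + (1) = (gold - 1) * ((0) + (0))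
      ring
    · show (-(gold - 1) : ℝ) + (-(gold - 1)) = (gold - 1) * ((-1) + (-1))
      ring
  · exact absurd hadj (by decide)
  · exact absurd rfl hne
  · refine Or.inr ⟨2, 9, ?_⟩
    ext r
    fin_cases r
    · show (0 : ℝ) + (gold - 1) = (gold - 1) * ((0) + (1))
      ring
    · show (-1 : ℝ) + (0) = (gold - 1) * ((-1) + (-(gold - 1)))
      linear_combination (1 : ℝ) * gold_sq'
    · show (-(gold - 1) : ℝ) + (1) = (gold - 1) * ((gold - 1) + (0))
      linear_combination (-1 : ℝ) * gold_sq'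
  · exact absurd hadj (by decide)
  · refine Or.inr ⟨2, 11, ?_⟩
    ext r
    fin_cases r
    · show (0 : ℝ) + (-(gold - 1)) = (gold - 1) * ((0) + (-1))
      ring
    · show (-1 : ℝ) + (0) = (gold - 1) * ((-1) + (-(gold - 1)))
      linear_combination (1 : ℝ) * gold_sq'
    · show (-(gold - 1) : ℝ) + (1) = (gold - 1) * ((gold - 1) + (0))
      linear_combination (-1 : ℝ) * gold_sq'
  · exact absurd hadj (by decide)
  · refine Or.inr ⟨5, 9, ?_⟩
    ext r
    fin_cases r
    · show (0 : ℝ) + (1) = (gold - 1) * ((gold - 1) + (1))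
      linear_combination (-1 : ℝ) * gold_sq'
    · show (-1 : ℝ) + (gold - 1) = (gold - 1) * ((0) + (-(gold - 1)))
      linear_combination (1 : ℝ) * gold_sq'
    · show (-(gold - 1) : ℝ) + (0) = (gold - 1) * ((-1) + (0))
      ring
  · exact absurd hadj (by decide)
  · refine Or.inr ⟨7, 11, ?_⟩
    ext r
    fin_cases r
    · show (0 : ℝ) + (-1) = (gold - 1) * ((-(gold - 1)) + (-1))
      linear_combination (1 : ℝ) * gold_sq'
    · show (-1 : ℝ) + (gold - 1) = (gold - 1) * ((0) + (-(gold - 1)))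
      linear_combination (1 : ℝ) * gold_sq'
    · show (-(gold - 1) : ℝ) + (0) = (gold - 1) * ((-1) + (0))
      ring
  · exact absurd hadj (by decide)
  · exact absurd hadj (by decide)
  · refine Or.inr ⟨0, 8, ?_⟩
    ext r
    fin_cases r
    · show (gold - 1 : ℝ) + (0) = (gold - 1) * ((0) + (1))
      ring
    · show (0 : ℝ) + (1) = (gold - 1) * ((1) + (gold - 1))
      linear_combination (-1 : ℝ) * gold_sq'
    · show (1 : ℝ) + (-(gold - 1)) = (gold - 1) * ((gold - 1) + (0))
      linear_combination (-1 : ℝ) * gold_sq'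
  · exact absurd hadj (by decide)
  · refine Or.inr ⟨2, 9, ?_⟩
    ext r
    fin_cases r
    · show (gold - 1 : ℝ) + (0) = (gold - 1) * ((0) + (1))
      ring
    · show (0 : ℝ) + (-1) = (gold - 1) * ((-1) + (-(gold - 1)))
      linear_combination (1 : ℝ) * gold_sq'
    · show (1 : ℝ) + (-(gold - 1)) = (gold - 1) * ((gold - 1) + (0))
      linear_combination (-1 : ℝ) * gold_sq'
  · exact absurd rfl hne
  · refine Or.inr ⟨8, 9, ?_⟩
    ext r
    fin_cases r
    · show (gold - 1 : ℝ) + (gold - 1) = (gold - 1) * ((1) + (1))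
      ring
    · show (0 : ℝ) + (0) = (gold - 1) * ((gold - 1) + (-(gold - 1)))
      ring
    · show (1 : ℝ) + (-1) = (gold - 1) * ((0) + (0))
      ring
  · exact absurd hadj (by decide)
  · refine Or.inl ?_
    ext r
    fin_cases r
    · show (gold - 1 : ℝ) + (-(gold - 1)) = 0
      ring
    · show (0 : ℝ) + (0) = 0
      ring
    · show (1 : ℝ) + (-1) = 0
      ring
  · exact absurd hadj (by decide)
  · exact absurd hadj (by decide)
  · refine Or.inr ⟨0, 6, ?_⟩
    ext r
    fin_cases r
    · show (gold - 1 : ℝ) + (-1) = (gold - 1) * ((0) + (-(gold - 1)))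
      linear_combination (1 : ℝ) * gold_sq'
    · show (0 : ℝ) + (gold - 1) = (gold - 1) * ((1) + (0))
      ring
    · show (1 : ℝ) + (0) = (gold - 1) * ((gold - 1) + (1))
      linear_combination (-1 : ℝ) * gold_sq'
  · refine Or.inr ⟨2, 6, ?_⟩
    ext r
    fin_cases r
    · show (gold - 1 : ℝ) + (-1) = (gold - 1) * ((0) + (-(gold - 1)))
      linear_combination (1 : ℝ) * gold_sq'
    · show (0 : ℝ) + (-(gold - 1)) = (gold - 1) * ((-1) + (0))
      ring
    · show (1 : ℝ) + (0) = (gold - 1) * ((gold - 1) + (1))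
      linear_combination (-1 : ℝ) * gold_sq'
  · refine Or.inr ⟨1, 8, ?_⟩
    ext r
    fin_cases r
    · show (gold - 1 : ℝ) + (0) = (gold - 1) * ((0) + (1))
      ring
    · show (0 : ℝ) + (1) = (gold - 1) * ((1) + (gold - 1))
      linear_combination (-1 : ℝ) * gold_sq'
    · show (-1 : ℝ) + (gold - 1) = (gold - 1) * ((-(gold - 1)) + (0))
      linear_combination (1 : ℝ) * gold_sq'
  · exact absurd hadj (by decide)
  · refine Or.inr ⟨3, 9, ?_⟩
    ext r
    fin_cases r
    · show (gold - 1 : ℝ) + (0) = (gold - 1) * ((0) + (1))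
      ring
    · show (0 : ℝ) + (-1) = (gold - 1) * ((-1) + (-(gold - 1)))
      linear_combination (1 : ℝ) * gold_sq'
    · show (-1 : ℝ) + (gold - 1) = (gold - 1) * ((-(gold - 1)) + (0))
      linear_combination (1 : ℝ) * gold_sq'
  · exact absurd hadj (by decide)
  · refine Or.inr ⟨8, 9, ?_⟩
    ext r
    fin_cases r
    · show (gold - 1 : ℝ) + (gold - 1) = (gold - 1) * ((1) + (1))
      ring
    · show (0 : ℝ) + (0) = (gold - 1) * ((gold - 1) + (-(gold - 1)))
      ring
    · show (-1 : ℝ) + (1) = (gold - 1) * ((0) + (0))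
      ring
  · exact absurd rfl hne
  · refine Or.inl ?_
    ext r
    fin_cases r
    · show (gold - 1 : ℝ) + (-(gold - 1)) = 0
      ring
    · show (0 : ℝ) + (0) = 0
      ring
    · show (-1 : ℝ) + (1) = 0
      ring
  · exact absurd hadj (by decide)
  · exact absurd hadj (by decide)
  · exact absurd hadj (by decide)
  · refine Or.inr ⟨1, 7, ?_⟩
    ext r
    fin_cases r
    · show (gold - 1 : ℝ) + (-1) = (gold - 1) * ((0) + (-(gold - 1)))
      linear_combination (1 : ℝ) * gold_sq'
    · show (0 : ℝ) + (gold - 1) = (gold - 1) * ((1) + (0))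
      ring
    · show (-1 : ℝ) + (0) = (gold - 1) * ((-(gold - 1)) + (-1))
      linear_combination (1 : ℝ) * gold_sq'
  · refine Or.inr ⟨3, 7, ?_⟩
    ext r
    fin_cases r
    · show (gold - 1 : ℝ) + (-1) = (gold - 1) * ((0) + (-(gold - 1)))
      linear_combination (1 : ℝ) * gold_sq'
    · show (0 : ℝ) + (-(gold - 1)) = (gold - 1) * ((-1) + (0))
      ring
    · show (-1 : ℝ) + (0) = (gold - 1) * ((-(gold - 1)) + (-1))
      linear_combination (1 : ℝ) * gold_sq'
  · exact absurd hadj (by decide)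
  · refine Or.inr ⟨0, 10, ?_⟩
    ext r
    fin_cases r
    · show (-(gold - 1) : ℝ) + (0) = (gold - 1) * ((0) + (-1))
      ring
    · show (0 : ℝ) + (1) = (gold - 1) * ((1) + (gold - 1))
      linear_combination (-1 : ℝ) * gold_sq'
    · show (1 : ℝ) + (-(gold - 1)) = (gold - 1) * ((gold - 1) + (0))
      linear_combination (-1 : ℝ) * gold_sq'
  · exact absurd hadj (by decide)
  · refine Or.inr ⟨2, 11, ?_⟩
    ext r
    fin_cases r
    · show (-(gold - 1) : ℝ) + (0) = (gold - 1) * ((0) + (-1))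
      ring
    · show (0 : ℝ) + (-1) = (gold - 1) * ((-1) + (-(gold - 1)))
      linear_combination (1 : ℝ) * gold_sq'
    · show (1 : ℝ) + (-(gold - 1)) = (gold - 1) * ((gold - 1) + (0))
      linear_combination (-1 : ℝ) * gold_sq'
  · exact absurd hadj (by decide)
  · refine Or.inl ?_
    ext r
    fin_cases r
    · show (-(gold - 1) : ℝ) + (gold - 1) = 0
      ring
    · show (0 : ℝ) + (0) = 0
      ring
    · show (1 : ℝ) + (-1) = 0
      ring
  · exact absurd rfl hne
  · refine Or.inr ⟨10, 11, ?_⟩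
    ext r
    fin_cases r
    · show (-(gold - 1) : ℝ) + (-(gold - 1)) = (gold - 1) * ((-1) + (-1))
      ring
    · show (0 : ℝ) + (0) = (gold - 1) * ((gold - 1) + (-(gold - 1)))
      ring
    · show (1 : ℝ) + (-1) = (gold - 1) * ((0) + (0))
      ring
  · refine Or.inr ⟨0, 4, ?_⟩
    ext r
    fin_cases r
    · show (-(gold - 1) : ℝ) + (1) = (gold - 1) * ((0) + (gold - 1))
      linear_combination (-1 : ℝ) * gold_sq'
    · show (0 : ℝ) + (gold - 1) = (gold - 1) * ((1) + (0))
      ring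
    · show (1 : ℝ) + (0) = (gold - 1) * ((gold - 1) + (1))
      linear_combination (-1 : ℝ) * gold_sq'
  · refine Or.inr ⟨2, 4, ?_⟩
    ext r
    fin_cases r
    · show (-(gold - 1) : ℝ) + (1) = (gold - 1) * ((0) + (gold - 1))
      linear_combination (-1 : ℝ) * gold_sq'
    · show (0 : ℝ) + (-(gold - 1)) = (gold - 1) * ((-1) + (0))
      ring
    · show (1 : ℝ) + (0) = (gold - 1) * ((gold - 1) + (1))
      linear_combination (-1 : ℝ) * gold_sq'
  · exact absurd hadj (by decide)
  · exact absurd hadj (by decide)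
  · refine Or.inr ⟨1, 10, ?_⟩
    ext r
    fin_cases r
    · show (-(gold - 1) : ℝ) + (0) = (gold - 1) * ((0) + (-1))
      ring
    · show (0 : ℝ) + (1) = (gold - 1) * ((1) + (gold - 1))
      linear_combination (-1 : ℝ) * gold_sq'
    · show (-1 : ℝ) + (gold - 1) = (gold - 1) * ((-(gold - 1)) + (0))
      linear_combination (1 : ℝ) * gold_sq'
  · exact absurd hadj (by decide)
  · refine Or.inr ⟨3, 11, ?_⟩
    ext r
    fin_cases r
    · show (-(gold - 1) : ℝ) + (0) = (gold - 1) * ((0) + (-1))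
      ring
    · show (0 : ℝ) + (-1) = (gold - 1) * ((-1) + (-(gold - 1)))
      linear_combination (1 : ℝ) * gold_sq'
    · show (-1 : ℝ) + (gold - 1) = (gold - 1) * ((-(gold - 1)) + (0))
      linear_combination (1 : ℝ) * gold_sq'
  · exact absurd hadj (by decide)
  · refine Or.inl ?_
    ext r
    fin_cases r
    · show (-(gold - 1) : ℝ) + (gold - 1) = 0
      ring
    · show (0 : ℝ) + (0) = 0
      ring
    · show (-1 : ℝ) + (1) = 0
      ring
  · exact absurd hadj (by decide)
  · refine Or.inr ⟨10, 11, ?_⟩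
    ext r
    fin_cases r
    · show (-(gold - 1) : ℝ) + (-(gold - 1)) = (gold - 1) * ((-1) + (-1))
      ring
    · show (0 : ℝ) + (0) = (gold - 1) * ((gold - 1) + (-(gold - 1)))
      ring
    · show (-1 : ℝ) + (1) = (gold - 1) * ((0) + (0))
      ring
  · exact absurd rfl hne
  · refine Or.inr ⟨1, 5, ?_⟩
    ext r
    fin_cases r
    · show (-(gold - 1) : ℝ) + (1) = (gold - 1) * ((0) + (gold - 1))
      linear_combination (-1 : ℝ) * gold_sq'
    · show (0 : ℝ) + (gold - 1) = (gold - 1) * ((1) + (0))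
      ring
    · show (-1 : ℝ) + (0) = (gold - 1) * ((-(gold - 1)) + (-1))
      linear_combination (1 : ℝ) * gold_sq'
  · refine Or.inr ⟨3, 5, ?_⟩
    ext r
    fin_cases r
    · show (-(gold - 1) : ℝ) + (1) = (gold - 1) * ((0) + (gold - 1))
      linear_combination (-1 : ℝ) * gold_sq'
    · show (0 : ℝ) + (-(gold - 1)) = (gold - 1) * ((-1) + (0))
      ring
    · show (-1 : ℝ) + (0) = (gold - 1) * ((-(gold - 1)) + (-1))
      linear_combination (1 : ℝ) * gold_sq'
  · exact absurd hadj (by decide)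
  · exact absurd hadj (by decide)
  · exact absurd hadj (by decide)
  · exact absurd hadj (by decide)
  · refine Or.inr ⟨4, 9, ?_⟩
    ext r
    fin_cases r
    · show (1 : ℝ) + (0) = (gold - 1) * ((gold - 1) + (1))
      linear_combination (-1 : ℝ) * gold_sq'
    · show (gold - 1 : ℝ) + (-1) = (gold - 1) * ((0) + (-(gold - 1)))
      linear_combination (1 : ℝ) * gold_sq'
    · show (0 : ℝ) + (gold - 1) = (gold - 1) * ((1) + (0))
      ring
  · refine Or.inr ⟨5, 9, ?_⟩
    ext r
    fin_cases r
    · show (1 : ℝ) + (0) = (gold - 1) * ((gold - 1) + (1))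
      linear_combination (-1 : ℝ) * gold_sq'
    · show (gold - 1 : ℝ) + (-1) = (gold - 1) * ((0) + (-(gold - 1)))
      linear_combination (1 : ℝ) * gold_sq'
    · show (0 : ℝ) + (-(gold - 1)) = (gold - 1) * ((-1) + (0))
      ring
  · exact absurd hadj (by decide)
  · exact absurd hadj (by decide)
  · refine Or.inr ⟨0, 4, ?_⟩
    ext r
    fin_cases r
    · show (1 : ℝ) + (-(gold - 1)) = (gold - 1) * ((0) + (gold - 1))
      linear_combination (-1 : ℝ) * gold_sq'
    · show (gold - 1 : ℝ) + (0) = (gold - 1) * ((1) + (0))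
      ring
    · show (0 : ℝ) + (1) = (gold - 1) * ((gold - 1) + (1))
      linear_combination (-1 : ℝ) * gold_sq'
  · refine Or.inr ⟨1, 5, ?_⟩
    ext r
    fin_cases r
    · show (1 : ℝ) + (-(gold - 1)) = (gold - 1) * ((0) + (gold - 1))
      linear_combination (-1 : ℝ) * gold_sq'
    · show (gold - 1 : ℝ) + (0) = (gold - 1) * ((1) + (0))
      ring
    · show (0 : ℝ) + (-1) = (gold - 1) * ((-(gold - 1)) + (-1))
      linear_combination (1 : ℝ) * gold_sq'
  · exact absurd rfl hne
  · exact absurd hadj (by decide)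
  · refine Or.inr ⟨0, 1, ?_⟩
    ext r
    fin_cases r
    · show (1 : ℝ) + (-1) = (gold - 1) * ((0) + (0))
      ring
    · show (gold - 1 : ℝ) + (gold - 1) = (gold - 1) * ((1) + (1))
      ring
    · show (0 : ℝ) + (0) = (gold - 1) * ((gold - 1) + (-(gold - 1)))
      ring
  · refine Or.inl ?_
    ext r
    fin_cases r
    · show (1 : ℝ) + (-1) = 0
      ring
    · show (gold - 1 : ℝ) + (-(gold - 1)) = 0
      ring
    · show (0 : ℝ) + (0) = 0
      ring
  · refine Or.inr ⟨4, 8, ?_⟩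
    ext r
    fin_cases r
    · show (1 : ℝ) + (0) = (gold - 1) * ((gold - 1) + (1))
      linear_combination (-1 : ℝ) * gold_sq'
    · show (-(gold - 1) : ℝ) + (1) = (gold - 1) * ((0) + (gold - 1))
      linear_combination (-1 : ℝ) * gold_sq'
    · show (0 : ℝ) + (gold - 1) = (gold - 1) * ((1) + (0))
      ring
  · refine Or.inr ⟨5, 8, ?_⟩
    ext r
    fin_cases r
    · show (1 : ℝ) + (0) = (gold - 1) * ((gold - 1) + (1))
      linear_combination (-1 : ℝ) * gold_sq'
    · show (-(gold - 1) : ℝ) + (1) = (gold - 1) * ((0) + (gold - 1))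
      linear_combination (-1 : ℝ) * gold_sq'
    · show (0 : ℝ) + (-(gold - 1)) = (gold - 1) * ((-1) + (0))
      ring
  · exact absurd hadj (by decide)
  · exact absurd hadj (by decide)
  · exact absurd hadj (by decide)
  · exact absurd hadj (by decide)
  · refine Or.inr ⟨2, 4, ?_⟩
    ext r
    fin_cases r
    · show (1 : ℝ) + (-(gold - 1)) = (gold - 1) * ((0) + (gold - 1))
      linear_combination (-1 : ℝ) * gold_sq'
    · show (-(gold - 1) : ℝ) + (0) = (gold - 1) * ((-1) + (0))
      ring
    · show (0 : ℝ) + (1) = (gold - 1) * ((gold - 1) + (1))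
      linear_combination (-1 : ℝ) * gold_sq'
  · refine Or.inr ⟨3, 5, ?_⟩
    ext r
    fin_cases r
    · show (1 : ℝ) + (-(gold - 1)) = (gold - 1) * ((0) + (gold - 1))
      linear_combination (-1 : ℝ) * gold_sq'
    · show (-(gold - 1) : ℝ) + (0) = (gold - 1) * ((-1) + (0))
      ring
    · show (0 : ℝ) + (-1) = (gold - 1) * ((-(gold - 1)) + (-1))
      linear_combination (1 : ℝ) * gold_sq'
  · exact absurd hadj (by decide)
  · exact absurd rfl hne
  · refine Or.inl ?_
    ext r
    fin_cases r
    · show (1 : ℝ) + (-1) = 0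
      ring
    · show (-(gold - 1) : ℝ) + (gold - 1) = 0
      ring
    · show (0 : ℝ) + (0) = 0
      ring
  · refine Or.inr ⟨2, 3, ?_⟩
    ext r
    fin_cases r
    · show (1 : ℝ) + (-1) = (gold - 1) * ((0) + (0))
      ring
    · show (-(gold - 1) : ℝ) + (-(gold - 1)) = (gold - 1) * ((-1) + (-1))
      ring
    · show (0 : ℝ) + (0) = (gold - 1) * ((gold - 1) + (-(gold - 1)))
      ring
  · exact absurd hadj (by decide)
  · exact absurd hadj (by decide)
  · refine Or.inr ⟨6, 11, ?_⟩
    ext r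
    fin_cases r
    · show (-1 : ℝ) + (0) = (gold - 1) * ((-(gold - 1)) + (-1))
      linear_combination (1 : ℝ) * gold_sq'
    · show (gold - 1 : ℝ) + (-1) = (gold - 1) * ((0) + (-(gold - 1)))
      linear_combination (1 : ℝ) * gold_sq'
    · show (0 : ℝ) + (gold - 1) = (gold - 1) * ((1) + (0))
      ring
  · refine Or.inr ⟨7, 11, ?_⟩
    ext r
    fin_cases r
    · show (-1 : ℝ) + (0) = (gold - 1) * ((-(gold - 1)) + (-1))
      linear_combination (1 : ℝ) * gold_sq'
    · show (gold - 1 : ℝ) + (-1) = (gold - 1) * ((0) + (-(gold - 1)))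
      linear_combination (1 : ℝ) * gold_sq'
    · show (0 : ℝ) + (-(gold - 1)) = (gold - 1) * ((-1) + (0))
      ring
  · refine Or.inr ⟨0, 6, ?_⟩
    ext r
    fin_cases r
    · show (-1 : ℝ) + (gold - 1) = (gold - 1) * ((0) + (-(gold - 1)))
      linear_combination (1 : ℝ) * gold_sq'
    · show (gold - 1 : ℝ) + (0) = (gold - 1) * ((1) + (0))
      ring
    · show (0 : ℝ) + (1) = (gold - 1) * ((gold - 1) + (1))
      linear_combination (-1 : ℝ) * gold_sq'
  · refine Or.inr ⟨1, 7, ?_⟩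
    ext r
    fin_cases r
    · show (-1 : ℝ) + (gold - 1) = (gold - 1) * ((0) + (-(gold - 1)))
      linear_combination (1 : ℝ) * gold_sq'
    · show (gold - 1 : ℝ) + (0) = (gold - 1) * ((1) + (0))
      ring
    · show (0 : ℝ) + (-1) = (gold - 1) * ((-(gold - 1)) + (-1))
      linear_combination (1 : ℝ) * gold_sq'
  · exact absurd hadj (by decide)
  · exact absurd hadj (by decide)
  · refine Or.inr ⟨0, 1, ?_⟩
    ext r
    fin_cases r
    · show (-1 : ℝ) + (1) = (gold - 1) * ((0) + (0))
      ring
    · show (gold - 1 : ℝ) + (gold - 1) = (gold - 1) * ((1) + (1))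
      ring
    · show (0 : ℝ) + (0) = (gold - 1) * ((gold - 1) + (-(gold - 1)))
      ring
  · refine Or.inl ?_
    ext r
    fin_cases r
    · show (-1 : ℝ) + (1) = 0
      ring
    · show (gold - 1 : ℝ) + (-(gold - 1)) = 0
      ring
    · show (0 : ℝ) + (0) = 0
      ring
  · exact absurd rfl hne
  · exact absurd hadj (by decide)
  · refine Or.inr ⟨6, 10, ?_⟩
    ext r
    fin_cases r
    · show (-1 : ℝ) + (0) = (gold - 1) * ((-(gold - 1)) + (-1))
      linear_combination (1 : ℝ) * gold_sq'
    · show (-(gold - 1) : ℝ) + (1) = (gold - 1) * ((0) + (gold - 1))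
      linear_combination (-1 : ℝ) * gold_sq'
    · show (0 : ℝ) + (gold - 1) = (gold - 1) * ((1) + (0))
      ring
  · refine Or.inr ⟨7, 10, ?_⟩
    ext r
    fin_cases r
    · show (-1 : ℝ) + (0) = (gold - 1) * ((-(gold - 1)) + (-1))
      linear_combination (1 : ℝ) * gold_sq'
    · show (-(gold - 1) : ℝ) + (1) = (gold - 1) * ((0) + (gold - 1))
      linear_combination (-1 : ℝ) * gold_sq'
    · show (0 : ℝ) + (-(gold - 1)) = (gold - 1) * ((-1) + (0))
      ring
  · exact absurd hadj (by decide)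
  · exact absurd hadj (by decide)
  · refine Or.inr ⟨2, 6, ?_⟩
    ext r
    fin_cases r
    · show (-1 : ℝ) + (gold - 1) = (gold - 1) * ((0) + (-(gold - 1)))
      linear_combination (1 : ℝ) * gold_sq'
    · show (-(gold - 1) : ℝ) + (0) = (gold - 1) * ((-1) + (0))
      ring
    · show (0 : ℝ) + (1) = (gold - 1) * ((gold - 1) + (1))
      linear_combination (-1 : ℝ) * gold_sq'
  · refine Or.inr ⟨3, 7, ?_⟩
    ext r
    fin_cases r
    · show (-1 : ℝ) + (gold - 1) = (gold - 1) * ((0) + (-(gold - 1)))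
      linear_combination (1 : ℝ) * gold_sq'
    · show (-(gold - 1) : ℝ) + (0) = (gold - 1) * ((-1) + (0))
      ring
    · show (0 : ℝ) + (-1) = (gold - 1) * ((-(gold - 1)) + (-1))
      linear_combination (1 : ℝ) * gold_sq'
  · exact absurd hadj (by decide)
  · exact absurd hadj (by decide)
  · refine Or.inl ?_
    ext r
    fin_cases r
    · show (-1 : ℝ) + (1) = 0
      ring
    · show (-(gold - 1) : ℝ) + (gold - 1) = 0
      ring
    · show (0 : ℝ) + (0) = 0
      ring
  · refine Or.inr ⟨2, 3, ?_⟩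
    ext r
    fin_cases r
    · show (-1 : ℝ) + (1) = (gold - 1) * ((0) + (0))
      ring
    · show (-(gold - 1) : ℝ) + (-(gold - 1)) = (gold - 1) * ((-1) + (-1))
      ring
    · show (0 : ℝ) + (0) = (gold - 1) * ((gold - 1) + (-(gold - 1)))
      ring
  · exact absurd hadj (by decide)
  · exact absurd rfl hne

lemma face_plane : ∀ t : Fin 20, ∀ i ∈ faceSet t, dot3 (nrm t) (verts i) = gold := by
  intro t i hi
  fin_cases t <;> fin_cases hi
  · show (-1 + (1)*gold) * (0) + (0 + (1)*gold) * (1) + (0 + (0)*gold) * (gold - 1) = gold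
    linear_combination (0 : ℝ) * gold_sq'
  · show (-1 + (1)*gold) * (0) + (0 + (1)*gold) * (1) + (0 + (0)*gold) * (-(gold - 1)) = gold
    linear_combination (0 : ℝ) * gold_sq'
  · show (-1 + (1)*gold) * (1) + (0 + (1)*gold) * (gold - 1) + (0 + (0)*gold) * (0) = gold
    linear_combination (1 : ℝ) * gold_sq'
  · show (1 + (-1)*gold) * (0) + (0 + (1)*gold) * (1) + (0 + (0)*gold) * (gold - 1) = gold
    linear_combination (0 : ℝ) * gold_sq'
  · show (1 + (-1)*gold) * (0) + (0 + (1)*gold) * (1) + (0 + (0)*gold) * (-(gold - 1)) = gold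
    linear_combination (0 : ℝ) * gold_sq'
  · show (1 + (-1)*gold) * (-1) + (0 + (1)*gold) * (gold - 1) + (0 + (0)*gold) * (0) = gold
    linear_combination (1 : ℝ) * gold_sq'
  · show (0 + (0)*gold) * (0) + (-1 + (1)*gold) * (1) + (0 + (1)*gold) * (gold - 1) = gold
    linear_combination (1 : ℝ) * gold_sq'
  · show (0 + (0)*gold) * (gold - 1) + (-1 + (1)*gold) * (0) + (0 + (1)*gold) * (1) = gold
    linear_combination (0 : ℝ) * gold_sq'
  · show (0 + (0)*gold) * (-(gold - 1)) + (-1 + (1)*gold) * (0) + (0 + (1)*gold) * (1) = gold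
    linear_combination (0 : ℝ) * gold_sq'
  · show (1 + (0)*gold) * (0) + (1 + (0)*gold) * (1) + (1 + (0)*gold) * (gold - 1) = gold
    linear_combination (0 : ℝ) * gold_sq'
  · show (1 + (0)*gold) * (gold - 1) + (1 + (0)*gold) * (0) + (1 + (0)*gold) * (1) = gold
    linear_combination (0 : ℝ) * gold_sq'
  · show (1 + (0)*gold) * (1) + (1 + (0)*gold) * (gold - 1) + (1 + (0)*gold) * (0) = gold
    linear_combination (0 : ℝ) * gold_sq'
  · show (-1 + (0)*gold) * (0) + (1 + (0)*gold) * (1) + (1 + (0)*gold) * (gold - 1) = gold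
    linear_combination (0 : ℝ) * gold_sq'
  · show (-1 + (0)*gold) * (-(gold - 1)) + (1 + (0)*gold) * (0) + (1 + (0)*gold) * (1) = gold
    linear_combination (0 : ℝ) * gold_sq'
  · show (-1 + (0)*gold) * (-1) + (1 + (0)*gold) * (gold - 1) + (1 + (0)*gold) * (0) = gold
    linear_combination (0 : ℝ) * gold_sq'
  · show (0 + (0)*gold) * (0) + (-1 + (1)*gold) * (1) + (0 + (-1)*gold) * (-(gold - 1)) = gold
    linear_combination (1 : ℝ) * gold_sq'
  · show (0 + (0)*gold) * (gold - 1) + (-1 + (1)*gold) * (0) + (0 + (-1)*gold) * (-1) = gold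
    linear_combination (0 : ℝ) * gold_sq'
  · show (0 + (0)*gold) * (-(gold - 1)) + (-1 + (1)*gold) * (0) + (0 + (-1)*gold) * (-1) = gold
    linear_combination (0 : ℝ) * gold_sq'
  · show (1 + (0)*gold) * (0) + (1 + (0)*gold) * (1) + (-1 + (0)*gold) * (-(gold - 1)) = gold
    linear_combination (0 : ℝ) * gold_sq'
  · show (1 + (0)*gold) * (gold - 1) + (1 + (0)*gold) * (0) + (-1 + (0)*gold) * (-1) = gold
    linear_combination (0 : ℝ) * gold_sq'
  · show (1 + (0)*gold) * (1) + (1 + (0)*gold) * (gold - 1) + (-1 + (0)*gold) * (0) = gold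
    linear_combination (0 : ℝ) * gold_sq'
  · show (-1 + (0)*gold) * (0) + (1 + (0)*gold) * (1) + (-1 + (0)*gold) * (-(gold - 1)) = gold
    linear_combination (0 : ℝ) * gold_sq'
  · show (-1 + (0)*gold) * (-(gold - 1)) + (1 + (0)*gold) * (0) + (-1 + (0)*gold) * (-1) = gold
    linear_combination (0 : ℝ) * gold_sq'
  · show (-1 + (0)*gold) * (-1) + (1 + (0)*gold) * (gold - 1) + (-1 + (0)*gold) * (0) = gold
    linear_combination (0 : ℝ) * gold_sq'
  · show (-1 + (1)*gold) * (0) + (0 + (-1)*gold) * (-1) + (0 + (0)*gold) * (gold - 1) = gold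
    linear_combination (0 : ℝ) * gold_sq'
  · show (-1 + (1)*gold) * (0) + (0 + (-1)*gold) * (-1) + (0 + (0)*gold) * (-(gold - 1)) = gold
    linear_combination (0 : ℝ) * gold_sq'
  · show (-1 + (1)*gold) * (1) + (0 + (-1)*gold) * (-(gold - 1)) + (0 + (0)*gold) * (0) = gold
    linear_combination (1 : ℝ) * gold_sq'
  · show (1 + (-1)*gold) * (0) + (0 + (-1)*gold) * (-1) + (0 + (0)*gold) * (gold - 1) = gold
    linear_combination (0 : ℝ) * gold_sq'
  · show (1 + (-1)*gold) * (0) + (0 + (-1)*gold) * (-1) + (0 + (0)*gold) * (-(gold - 1)) = gold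
    linear_combination (0 : ℝ) * gold_sq'
  · show (1 + (-1)*gold) * (-1) + (0 + (-1)*gold) * (-(gold - 1)) + (0 + (0)*gold) * (0) = gold
    linear_combination (1 : ℝ) * gold_sq'
  · show (0 + (0)*gold) * (0) + (1 + (-1)*gold) * (-1) + (0 + (1)*gold) * (gold - 1) = gold
    linear_combination (1 : ℝ) * gold_sq'
  · show (0 + (0)*gold) * (gold - 1) + (1 + (-1)*gold) * (0) + (0 + (1)*gold) * (1) = gold
    linear_combination (0 : ℝ) * gold_sq'
  · show (0 + (0)*gold) * (-(gold - 1)) + (1 + (-1)*gold) * (0) + (0 + (1)*gold) * (1) = gold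
    linear_combination (0 : ℝ) * gold_sq'
  · show (1 + (0)*gold) * (0) + (-1 + (0)*gold) * (-1) + (1 + (0)*gold) * (gold - 1) = gold
    linear_combination (0 : ℝ) * gold_sq'
  · show (1 + (0)*gold) * (gold - 1) + (-1 + (0)*gold) * (0) + (1 + (0)*gold) * (1) = gold
    linear_combination (0 : ℝ) * gold_sq'
  · show (1 + (0)*gold) * (1) + (-1 + (0)*gold) * (-(gold - 1)) + (1 + (0)*gold) * (0) = gold
    linear_combination (0 : ℝ) * gold_sq'
  · show (-1 + (0)*gold) * (0) + (-1 + (0)*gold) * (-1) + (1 + (0)*gold) * (gold - 1) = gold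
    linear_combination (0 : ℝ) * gold_sq'
  · show (-1 + (0)*gold) * (-(gold - 1)) + (-1 + (0)*gold) * (0) + (1 + (0)*gold) * (1) = gold
    linear_combination (0 : ℝ) * gold_sq'
  · show (-1 + (0)*gold) * (-1) + (-1 + (0)*gold) * (-(gold - 1)) + (1 + (0)*gold) * (0) = gold
    linear_combination (0 : ℝ) * gold_sq'
  · show (0 + (0)*gold) * (0) + (1 + (-1)*gold) * (-1) + (0 + (-1)*gold) * (-(gold - 1)) = gold
    linear_combination (1 : ℝ) * gold_sq'
  · show (0 + (0)*gold) * (gold - 1) + (1 + (-1)*gold) * (0) + (0 + (-1)*gold) * (-1) = gold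
    linear_combination (0 : ℝ) * gold_sq'
  · show (0 + (0)*gold) * (-(gold - 1)) + (1 + (-1)*gold) * (0) + (0 + (-1)*gold) * (-1) = gold
    linear_combination (0 : ℝ) * gold_sq'
  · show (1 + (0)*gold) * (0) + (-1 + (0)*gold) * (-1) + (-1 + (0)*gold) * (-(gold - 1)) = gold
    linear_combination (0 : ℝ) * gold_sq'
  · show (1 + (0)*gold) * (gold - 1) + (-1 + (0)*gold) * (0) + (-1 + (0)*gold) * (-1) = gold
    linear_combination (0 : ℝ) * gold_sq'
  · show (1 + (0)*gold) * (1) + (-1 + (0)*gold) * (-(gold - 1)) + (-1 + (0)*gold) * (0) = gold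
    linear_combination (0 : ℝ) * gold_sq'
  · show (-1 + (0)*gold) * (0) + (-1 + (0)*gold) * (-1) + (-1 + (0)*gold) * (-(gold - 1)) = gold
    linear_combination (0 : ℝ) * gold_sq'
  · show (-1 + (0)*gold) * (-(gold - 1)) + (-1 + (0)*gold) * (0) + (-1 + (0)*gold) * (-1) = gold
    linear_combination (0 : ℝ) * gold_sq'
  · show (-1 + (0)*gold) * (-1) + (-1 + (0)*gold) * (-(gold - 1)) + (-1 + (0)*gold) * (0) = gold
    linear_combination (0 : ℝ) * gold_sq'
  · show (0 + (1)*gold) * (gold - 1) + (0 + (0)*gold) * (0) + (-1 + (1)*gold) * (1) = gold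
    linear_combination (1 : ℝ) * gold_sq'
  · show (0 + (1)*gold) * (1) + (0 + (0)*gold) * (gold - 1) + (-1 + (1)*gold) * (0) = gold
    linear_combination (0 : ℝ) * gold_sq'
  · show (0 + (1)*gold) * (1) + (0 + (0)*gold) * (-(gold - 1)) + (-1 + (1)*gold) * (0) = gold
    linear_combination (0 : ℝ) * gold_sq'
  · show (0 + (1)*gold) * (gold - 1) + (0 + (0)*gold) * (0) + (1 + (-1)*gold) * (-1) = gold
    linear_combination (1 : ℝ) * gold_sq'
  · show (0 + (1)*gold) * (1) + (0 + (0)*gold) * (gold - 1) + (1 + (-1)*gold) * (0) = gold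
    linear_combination (0 : ℝ) * gold_sq'
  · show (0 + (1)*gold) * (1) + (0 + (0)*gold) * (-(gold - 1)) + (1 + (-1)*gold) * (0) = gold
    linear_combination (0 : ℝ) * gold_sq'
  · show (0 + (-1)*gold) * (-(gold - 1)) + (0 + (0)*gold) * (0) + (-1 + (1)*gold) * (1) = gold
    linear_combination (1 : ℝ) * gold_sq'
  · show (0 + (-1)*gold) * (-1) + (0 + (0)*gold) * (gold - 1) + (-1 + (1)*gold) * (0) = gold
    linear_combination (0 : ℝ) * gold_sq'
  · show (0 + (-1)*gold) * (-1) + (0 + (0)*gold) * (-(gold - 1)) + (-1 + (1)*gold) * (0) = gold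
    linear_combination (0 : ℝ) * gold_sq'
  · show (0 + (-1)*gold) * (-(gold - 1)) + (0 + (0)*gold) * (0) + (1 + (-1)*gold) * (-1) = gold
    linear_combination (1 : ℝ) * gold_sq'
  · show (0 + (-1)*gold) * (-1) + (0 + (0)*gold) * (gold - 1) + (1 + (-1)*gold) * (0) = gold
    linear_combination (0 : ℝ) * gold_sq'
  · show (0 + (-1)*gold) * (-1) + (0 + (0)*gold) * (-(gold - 1)) + (1 + (-1)*gold) * (0) = gold
    linear_combination (0 : ℝ) * gold_sq'

/-- Example 2.2: with s = 10⁻³·(1,1,1), the model set Λ(0, s + W)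
with the icosahedral window W is generic: ∂(s+W) ∩ L* = ∅. -/
theorem icosahedral_example_generic :
    IsGeneric ((fun x => sVec + x) '' Wico) := by
  show frontier ((fun x => sVec + x) '' Wico) ∩ (starMap '' Lset) = ∅
  rw [Set.eq_empty_iff_forall_notMem]
  rintro x ⟨hxf, α, hαL, hxα⟩
  classical
  have himg : (fun x => sVec + x) '' frontier Wico = frontier ((fun x => sVec + x) '' Wico) :=
    (Homeomorph.addLeft sVec).image_frontier Wico
  rw [← himg] at hxf
  obtain ⟨x₀, hx₀f, hx₀⟩ := hxf
  have hclosed : IsClosed Wico := by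
    rw [hWico]
    exact ((Set.finite_range verts).isCompact_convexHull ℝ).isClosed
  have hx₀W : x₀ ∈ Wico := by
    have h := frontier_subset_closure hx₀f
    rwa [hclosed.closure_eq] at h
  have hx₀ni : x₀ ∉ interior Wico := by
    rw [← closure_diff_interior] at hx₀f
    exact hx₀f.2
  obtain ⟨f, hf⟩ := geometric_hahn_banach_open_point hconv.interior isOpen_interior hx₀ni
  have hle : ∀ y ∈ Wico, f y ≤ f x₀ := hle_aux f (f x₀) hf
  have hrep := hx₀W
  rw [hWico, convexHull_eq] at hrep
  obtain ⟨ι, tset, w, z, hw0, hw1, hz, hcm⟩ := hrep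
  rw [Finset.centerMass_eq_of_sum_1 _ _ hw1] at hcm
  have hfx : ∑ i ∈ tset, w i * f (z i) = f x₀ := by
    rw [← hcm, map_sum]
    exact Finset.sum_congr rfl fun i _ => by rw [map_smul]; rfl
  have hterm : ∀ i ∈ tset, w i * (f x₀ - f (z i)) = 0 := by
    have hnn : ∀ i ∈ tset, 0 ≤ w i * (f x₀ - f (z i)) := by
      intro j hj
      have hzW : z j ∈ Wico := by
        rw [hWico]; exact subset_convexHull ℝ _ (hz j hj)
      exact mul_nonneg (hw0 j hj) (by linarith [hle (z j) hzW])
    have hsumz : ∑ i ∈ tset, w i * (f x₀ - f (z i)) = 0 := by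
      simp only [mul_sub]
      rw [Finset.sum_sub_distrib, ← Finset.sum_mul, hw1, hfx, one_mul, sub_self]
    exact fun i hi => (Finset.sum_eq_zero_iff_of_nonneg hnn).mp hsumz i hi
  have hfzal : ∀ i ∈ tset, w i ≠ 0 → f (z i) = f x₀ := by
    intro i hi hwi
    rcases mul_eq_zero.mp (hterm i hi) with h | h
    · exact absurd h hwi
    · linarith
  have hedge : ∀ a b : Fin 12, f (verts a) = f x₀ → f (verts b) = f x₀ → a ≠ b →
      adjMat a b = true := by
    intro a b hxa hxb hab
    by_contra hadj
    have hadj' : adjMat a b = false := by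
      rcases Bool.dichotomy (adjMat a b) with h | h
      · exact h
      · exact absurd h hadj
    have hfm : f ((1/2 : ℝ) • (verts a + verts b)) = f x₀ := by
      have e : f ((1/2 : ℝ) • (verts a + verts b)) = (1/2:ℝ) * (f (verts a) + f (verts b)) := by
        rw [map_smul, map_add]
        rfl
      rw [e, hxa, hxb]
      ring
    obtain hrep0 | ⟨k, l, hkl⟩ := nonadj_rep a b hab hadj'
    · rw [hrep0, smul_zero] at hfm
      linarith [hf 0 zero_interior, hfm]
    · have hk : verts k ∈ Wico := by rw [hWico]; exact subset_convexHull ℝ _ ⟨k, rfl⟩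
      have hl : verts l ∈ Wico := by rw [hWico]; exact subset_convexHull ℝ _ ⟨l, rfl⟩
      have humem : (1/2 : ℝ) • (verts k + verts l) ∈ Wico := by
        rw [smul_add]
        exact hconv hk hl (by norm_num) (by norm_num) (by norm_num)
      have hmm : (1/2 : ℝ) • (verts a + verts b)
          = (2 - gold) • (0 : E3) + (gold - 1) • ((1/2 : ℝ) • (verts k + verts l)) := by
        rw [hkl, smul_zero, zero_add, smul_smul, smul_smul, mul_comm]
      have hint : (1/2 : ℝ) • (verts a + verts b) ∈ interior Wico := by
        rw [hmm]
        exact hconv.combo_interior_closure_mem_interior zero_interior (subset_closure humem)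
          (by linarith [gold_lt2]) (by linarith [one_lt_gold']) (by ring)
      linarith [hf _ hint, hfm]
  have hPne : ∃ a : Fin 12, f (verts a) = f x₀ := by
    have hwex : ∃ i ∈ tset, w i ≠ 0 := by
      by_contra hno
      push_neg at hno
      have h0 : ∑ i ∈ tset, w i = 0 := Finset.sum_eq_zero hno
      rw [hw1] at h0
      norm_num at h0
    obtain ⟨i, hi, hwi⟩ := hwex
    obtain ⟨a, ha⟩ := hz i hi
    exact ⟨a, by rw [ha]; exact hfzal i hi hwi⟩
  obtain ⟨tf, htf⟩ := clique_face (fun a => f (verts a) = f x₀) hPne hedge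
  have hplane : dot3 (nrm tf) x₀ = gold := by
    have hlin : dot3 (nrm tf) x₀ = ∑ i ∈ tset, w i * dot3 (nrm tf) (z i) := by
      rw [dot3_inner, ← hcm, map_sum]
      exact Finset.sum_congr rfl fun i _ => by rw [dot3_inner, map_smul]; rfl
    rw [hlin]
    have hcongr : ∀ i ∈ tset, w i * dot3 (nrm tf) (z i) = w i * gold := by
      intro i hi
      by_cases hwi : w i = 0
      · rw [hwi, zero_mul, zero_mul]
      · obtain ⟨a, ha⟩ := hz i hi
        have hPa : f (verts a) = f x₀ := by rw [ha]; exact hfzal i hi hwi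
        rw [← ha, face_plane tf a (htf a hPa)]
    rw [Finset.sum_congr rfl hcongr, ← Finset.sum_mul, hw1, one_mul]
  have hplx : dot3 (nrm tf) x = gold + dot3 (nrm tf) sVec := by
    rw [← hx₀]
    have hsum : dot3 (nrm tf) (sVec + x₀) = dot3 (nrm tf) sVec + dot3 (nrm tf) x₀ := by
      show nrm tf 0 * (sVec 0 + x₀ 0) + nrm tf 1 * (sVec 1 + x₀ 1) + nrm tf 2 * (sVec 2 + x₀ 2)
          = (nrm tf 0 * sVec 0 + nrm tf 1 * sVec 1 + nrm tf 2 * sVec 2)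
            + (nrm tf 0 * x₀ 0 + nrm tf 1 * x₀ 1 + nrm tf 2 * x₀ 2)
      ring
    rw [hsum, hplane]
    ring
  obtain ⟨a, b, c, ⟨a1, a2, ha⟩, ⟨b1, b2, hb⟩, ⟨c1, c2, hc⟩, heq⟩ := hαL
  have h0' : 2 * α 0 = a * 2 + b * (gold + 1) + c * 0 := congrFun (congrArg WithLp.ofLp heq) 0
  have h1' : 2 * α 1 = a * 0 + b * gold + c * 0 := congrFun (congrArg WithLp.ofLp heq) 1
  have h2' : 2 * α 2 = a * 0 + b * 1 + c * 2 := congrFun (congrArg WithLp.ofLp heq) 2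
  obtain ⟨m0, n0, hx0⟩ : ∃ m n : ℤ, x 0 = ((m:ℝ) + (n:ℝ)*gold)/2 := by
    refine ⟨2*a1+2*a2+2*b1+3*b2, -(2*a2+b1+2*b2), ?_⟩
    have hα0 : α 0 = (((2*a1+b1+b2 : ℤ) : ℚ)/2 : ℚ) + ((((2*a2+b1+2*b2 : ℤ) : ℚ)/2 : ℚ)) * gold := by
      push_cast
      linear_combination h0'/2 + ha + (gold+1)/2 * hb + (b2:ℝ)/2 * gold_sq'
    rw [← hxα]
    show conjTau (α 0) = _
    rw [hα0, conjTau_eval]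
    push_cast
    ring
  obtain ⟨m1, n1, hx1⟩ : ∃ m n : ℤ, x 1 = ((m:ℝ) + (n:ℝ)*gold)/2 := by
    refine ⟨b1+2*b2, -(b1+b2), ?_⟩
    have hα1 : α 1 = (((b2 : ℤ) : ℚ)/2 : ℚ) + ((((b1+b2 : ℤ) : ℚ)/2 : ℚ)) * gold := by
      push_cast
      linear_combination h1'/2 + gold/2 * hb + (b2:ℝ)/2 * gold_sq'
    rw [← hxα]
    show conjTau (α 1) = _
    rw [hα1, conjTau_eval]
    push_cast
    ring
  obtain ⟨m2, n2, hx2⟩ : ∃ m n : ℤ, x 2 = ((m:ℝ) + (n:ℝ)*gold)/2 := by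
    refine ⟨b1+b2+2*c1+2*c2, -(b2+2*c2), ?_⟩
    have hα2 : α 2 = (((b1+2*c1 : ℤ) : ℚ)/2 : ℚ) + ((((b2+2*c2 : ℤ) : ℚ)/2 : ℚ)) * gold := by
      push_cast
      linear_combination h2'/2 + hb/2 + hc
    rw [← hxα]
    show conjTau (α 2) = _
    rw [hα2, conjTau_eval]
    push_cast
    ring
  clear hcm hfx hterm hfzal hedge hPne htf hplane h0' h1' h2' ha hb hc heq hle hf
  fin_cases tf
  · replace hplx : ((-1) + (1)*gold) * x 0 + ((0) + (1)*gold) * x 1 + ((0) + (0)*gold) * x 2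
        = gold + (((-1) + (1)*gold) * ((10:ℝ)⁻¹^3 * 1) + ((0) + (1)*gold) * ((10:ℝ)⁻¹^3 * 1) + ((0) + (0)*gold) * ((10:ℝ)⁻¹^3 * 1)) := hplx
    exact key ((-1)*m0 + (1)*n0 + (1)*n1) ((1)*m0 + (1)*m1 + (1)*n1) (-1) (2) (by decide) (by decide) (by
      push_cast
      linear_combination hplx - ((-1) + (1)*gold)*hx0 - ((0) + (1)*gold)*hx1 - ((0) + (0)*gold)*hx2 - (((1)*(n0:ℝ) + (1)*(n1:ℝ))/2)*gold_sq')
  · replace hplx : ((1) + (-1)*gold) * x 0 + ((0) + (1)*gold) * x 1 + ((0) + (0)*gold) * x 2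
        = gold + (((1) + (-1)*gold) * ((10:ℝ)⁻¹^3 * 1) + ((0) + (1)*gold) * ((10:ℝ)⁻¹^3 * 1) + ((0) + (0)*gold) * ((10:ℝ)⁻¹^3 * 1)) := hplx
    exact key ((1)*m0 + (-1)*n0 + (1)*n1) ((-1)*m0 + (1)*m1 + (1)*n1) (1) (0) (by decide) (by decide) (by
      push_cast
      linear_combination hplx - ((1) + (-1)*gold)*hx0 - ((0) + (1)*gold)*hx1 - ((0) + (0)*gold)*hx2 - (((-1)*(n0:ℝ) + (1)*(n1:ℝ))/2)*gold_sq')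
  · replace hplx : ((0) + (0)*gold) * x 0 + ((-1) + (1)*gold) * x 1 + ((0) + (1)*gold) * x 2
        = gold + (((0) + (0)*gold) * ((10:ℝ)⁻¹^3 * 1) + ((-1) + (1)*gold) * ((10:ℝ)⁻¹^3 * 1) + ((0) + (1)*gold) * ((10:ℝ)⁻¹^3 * 1)) := hplx
    exact key ((-1)*m1 + (1)*n1 + (1)*n2) ((1)*m1 + (1)*m2 + (1)*n2) (-1) (2) (by decide) (by decide) (by
      push_cast
      linear_combination hplx - ((0) + (0)*gold)*hx0 - ((-1) + (1)*gold)*hx1 - ((0) + (1)*gold)*hx2 - (((1)*(n1:ℝ) + (1)*(n2:ℝ))/2)*gold_sq')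
  · replace hplx : ((1) + (0)*gold) * x 0 + ((1) + (0)*gold) * x 1 + ((1) + (0)*gold) * x 2
        = gold + (((1) + (0)*gold) * ((10:ℝ)⁻¹^3 * 1) + ((1) + (0)*gold) * ((10:ℝ)⁻¹^3 * 1) + ((1) + (0)*gold) * ((10:ℝ)⁻¹^3 * 1)) := hplx
    exact key ((1)*m0 + (1)*m1 + (1)*m2) ((1)*n0 + (1)*n1 + (1)*n2) (3) (0) (by decide) (by decide) (by
      push_cast
      linear_combination hplx - ((1) + (0)*gold)*hx0 - ((1) + (0)*gold)*hx1 - ((1) + (0)*gold)*hx2 - ((0)/2)*gold_sq')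
  · replace hplx : ((-1) + (0)*gold) * x 0 + ((1) + (0)*gold) * x 1 + ((1) + (0)*gold) * x 2
        = gold + (((-1) + (0)*gold) * ((10:ℝ)⁻¹^3 * 1) + ((1) + (0)*gold) * ((10:ℝ)⁻¹^3 * 1) + ((1) + (0)*gold) * ((10:ℝ)⁻¹^3 * 1)) := hplx
    exact key ((-1)*m0 + (1)*m1 + (1)*m2) ((-1)*n0 + (1)*n1 + (1)*n2) (1) (0) (by decide) (by decide) (by
      push_cast
      linear_combination hplx - ((-1) + (0)*gold)*hx0 - ((1) + (0)*gold)*hx1 - ((1) + (0)*gold)*hx2 - ((0)/2)*gold_sq')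
  · replace hplx : ((0) + (0)*gold) * x 0 + ((-1) + (1)*gold) * x 1 + ((0) + (-1)*gold) * x 2
        = gold + (((0) + (0)*gold) * ((10:ℝ)⁻¹^3 * 1) + ((-1) + (1)*gold) * ((10:ℝ)⁻¹^3 * 1) + ((0) + (-1)*gold) * ((10:ℝ)⁻¹^3 * 1)) := hplx
    exact key ((-1)*m1 + (1)*n1 + (-1)*n2) ((1)*m1 + (-1)*m2 + (-1)*n2) (-1) (0) (by decide) (by decide) (by
      push_cast
      linear_combination hplx - ((0) + (0)*gold)*hx0 - ((-1) + (1)*gold)*hx1 - ((0) + (-1)*gold)*hx2 - (((1)*(n1:ℝ) + (-1)*(n2:ℝ))/2)*gold_sq')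
  · replace hplx : ((1) + (0)*gold) * x 0 + ((1) + (0)*gold) * x 1 + ((-1) + (0)*gold) * x 2
        = gold + (((1) + (0)*gold) * ((10:ℝ)⁻¹^3 * 1) + ((1) + (0)*gold) * ((10:ℝ)⁻¹^3 * 1) + ((-1) + (0)*gold) * ((10:ℝ)⁻¹^3 * 1)) := hplx
    exact key ((1)*m0 + (1)*m1 + (-1)*m2) ((1)*n0 + (1)*n1 + (-1)*n2) (1) (0) (by decide) (by decide) (by
      push_cast
      linear_combination hplx - ((1) + (0)*gold)*hx0 - ((1) + (0)*gold)*hx1 - ((-1) + (0)*gold)*hx2 - ((0)/2)*gold_sq')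
  · replace hplx : ((-1) + (0)*gold) * x 0 + ((1) + (0)*gold) * x 1 + ((-1) + (0)*gold) * x 2
        = gold + (((-1) + (0)*gold) * ((10:ℝ)⁻¹^3 * 1) + ((1) + (0)*gold) * ((10:ℝ)⁻¹^3 * 1) + ((-1) + (0)*gold) * ((10:ℝ)⁻¹^3 * 1)) := hplx
    exact key ((-1)*m0 + (1)*m1 + (-1)*m2) ((-1)*n0 + (1)*n1 + (-1)*n2) (-1) (0) (by decide) (by decide) (by
      push_cast
      linear_combination hplx - ((-1) + (0)*gold)*hx0 - ((1) + (0)*gold)*hx1 - ((-1) + (0)*gold)*hx2 - ((0)/2)*gold_sq')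
  · replace hplx : ((-1) + (1)*gold) * x 0 + ((0) + (-1)*gold) * x 1 + ((0) + (0)*gold) * x 2
        = gold + (((-1) + (1)*gold) * ((10:ℝ)⁻¹^3 * 1) + ((0) + (-1)*gold) * ((10:ℝ)⁻¹^3 * 1) + ((0) + (0)*gold) * ((10:ℝ)⁻¹^3 * 1)) := hplx
    exact key ((-1)*m0 + (1)*n0 + (-1)*n1) ((1)*m0 + (-1)*m1 + (-1)*n1) (-1) (0) (by decide) (by decide) (by
      push_cast
      linear_combination hplx - ((-1) + (1)*gold)*hx0 - ((0) + (-1)*gold)*hx1 - ((0) + (0)*gold)*hx2 - (((1)*(n0:ℝ) + (-1)*(n1:ℝ))/2)*gold_sq')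
  · replace hplx : ((1) + (-1)*gold) * x 0 + ((0) + (-1)*gold) * x 1 + ((0) + (0)*gold) * x 2
        = gold + (((1) + (-1)*gold) * ((10:ℝ)⁻¹^3 * 1) + ((0) + (-1)*gold) * ((10:ℝ)⁻¹^3 * 1) + ((0) + (0)*gold) * ((10:ℝ)⁻¹^3 * 1)) := hplx
    exact key ((1)*m0 + (-1)*n0 + (-1)*n1) ((-1)*m0 + (-1)*m1 + (-1)*n1) (1) (-2) (by decide) (by decide) (by
      push_cast
      linear_combination hplx - ((1) + (-1)*gold)*hx0 - ((0) + (-1)*gold)*hx1 - ((0) + (0)*gold)*hx2 - (((-1)*(n0:ℝ) + (-1)*(n1:ℝ))/2)*gold_sq')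
  · replace hplx : ((0) + (0)*gold) * x 0 + ((1) + (-1)*gold) * x 1 + ((0) + (1)*gold) * x 2
        = gold + (((0) + (0)*gold) * ((10:ℝ)⁻¹^3 * 1) + ((1) + (-1)*gold) * ((10:ℝ)⁻¹^3 * 1) + ((0) + (1)*gold) * ((10:ℝ)⁻¹^3 * 1)) := hplx
    exact key ((1)*m1 + (-1)*n1 + (1)*n2) ((-1)*m1 + (1)*m2 + (1)*n2) (1) (0) (by decide) (by decide) (by
      push_cast
      linear_combination hplx - ((0) + (0)*gold)*hx0 - ((1) + (-1)*gold)*hx1 - ((0) + (1)*gold)*hx2 - (((-1)*(n1:ℝ) + (1)*(n2:ℝ))/2)*gold_sq')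
  · replace hplx : ((1) + (0)*gold) * x 0 + ((-1) + (0)*gold) * x 1 + ((1) + (0)*gold) * x 2
        = gold + (((1) + (0)*gold) * ((10:ℝ)⁻¹^3 * 1) + ((-1) + (0)*gold) * ((10:ℝ)⁻¹^3 * 1) + ((1) + (0)*gold) * ((10:ℝ)⁻¹^3 * 1)) := hplx
    exact key ((1)*m0 + (-1)*m1 + (1)*m2) ((1)*n0 + (-1)*n1 + (1)*n2) (1) (0) (by decide) (by decide) (by
      push_cast
      linear_combination hplx - ((1) + (0)*gold)*hx0 - ((-1) + (0)*gold)*hx1 - ((1) + (0)*gold)*hx2 - ((0)/2)*gold_sq')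
  · replace hplx : ((-1) + (0)*gold) * x 0 + ((-1) + (0)*gold) * x 1 + ((1) + (0)*gold) * x 2
        = gold + (((-1) + (0)*gold) * ((10:ℝ)⁻¹^3 * 1) + ((-1) + (0)*gold) * ((10:ℝ)⁻¹^3 * 1) + ((1) + (0)*gold) * ((10:ℝ)⁻¹^3 * 1)) := hplx
    exact key ((-1)*m0 + (-1)*m1 + (1)*m2) ((-1)*n0 + (-1)*n1 + (1)*n2) (-1) (0) (by decide) (by decide) (by
      push_cast
      linear_combination hplx - ((-1) + (0)*gold)*hx0 - ((-1) + (0)*gold)*hx1 - ((1) + (0)*gold)*hx2 - ((0)/2)*gold_sq')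
  · replace hplx : ((0) + (0)*gold) * x 0 + ((1) + (-1)*gold) * x 1 + ((0) + (-1)*gold) * x 2
        = gold + (((0) + (0)*gold) * ((10:ℝ)⁻¹^3 * 1) + ((1) + (-1)*gold) * ((10:ℝ)⁻¹^3 * 1) + ((0) + (-1)*gold) * ((10:ℝ)⁻¹^3 * 1)) := hplx
    exact key ((1)*m1 + (-1)*n1 + (-1)*n2) ((-1)*m1 + (-1)*m2 + (-1)*n2) (1) (-2) (by decide) (by decide) (by
      push_cast
      linear_combination hplx - ((0) + (0)*gold)*hx0 - ((1) + (-1)*gold)*hx1 - ((0) + (-1)*gold)*hx2 - (((-1)*(n1:ℝ) + (-1)*(n2:ℝ))/2)*gold_sq')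
  · replace hplx : ((1) + (0)*gold) * x 0 + ((-1) + (0)*gold) * x 1 + ((-1) + (0)*gold) * x 2
        = gold + (((1) + (0)*gold) * ((10:ℝ)⁻¹^3 * 1) + ((-1) + (0)*gold) * ((10:ℝ)⁻¹^3 * 1) + ((-1) + (0)*gold) * ((10:ℝ)⁻¹^3 * 1)) := hplx
    exact key ((1)*m0 + (-1)*m1 + (-1)*m2) ((1)*n0 + (-1)*n1 + (-1)*n2) (-1) (0) (by decide) (by decide) (by
      push_cast
      linear_combination hplx - ((1) + (0)*gold)*hx0 - ((-1) + (0)*gold)*hx1 - ((-1) + (0)*gold)*hx2 - ((0)/2)*gold_sq')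
  · replace hplx : ((-1) + (0)*gold) * x 0 + ((-1) + (0)*gold) * x 1 + ((-1) + (0)*gold) * x 2
        = gold + (((-1) + (0)*gold) * ((10:ℝ)⁻¹^3 * 1) + ((-1) + (0)*gold) * ((10:ℝ)⁻¹^3 * 1) + ((-1) + (0)*gold) * ((10:ℝ)⁻¹^3 * 1)) := hplx
    exact key ((-1)*m0 + (-1)*m1 + (-1)*m2) ((-1)*n0 + (-1)*n1 + (-1)*n2) (-3) (0) (by decide) (by decide) (by
      push_cast
      linear_combination hplx - ((-1) + (0)*gold)*hx0 - ((-1) + (0)*gold)*hx1 - ((-1) + (0)*gold)*hx2 - ((0)/2)*gold_sq')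
  · replace hplx : ((0) + (1)*gold) * x 0 + ((0) + (0)*gold) * x 1 + ((-1) + (1)*gold) * x 2
        = gold + (((0) + (1)*gold) * ((10:ℝ)⁻¹^3 * 1) + ((0) + (0)*gold) * ((10:ℝ)⁻¹^3 * 1) + ((-1) + (1)*gold) * ((10:ℝ)⁻¹^3 * 1)) := hplx
    exact key ((1)*n0 + (-1)*m2 + (1)*n2) ((1)*m0 + (1)*n0 + (1)*m2) (-1) (2) (by decide) (by decide) (by
      push_cast
      linear_combination hplx - ((0) + (1)*gold)*hx0 - ((0) + (0)*gold)*hx1 - ((-1) + (1)*gold)*hx2 - (((1)*(n0:ℝ) + (1)*(n2:ℝ))/2)*gold_sq')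
  · replace hplx : ((0) + (1)*gold) * x 0 + ((0) + (0)*gold) * x 1 + ((1) + (-1)*gold) * x 2
        = gold + (((0) + (1)*gold) * ((10:ℝ)⁻¹^3 * 1) + ((0) + (0)*gold) * ((10:ℝ)⁻¹^3 * 1) + ((1) + (-1)*gold) * ((10:ℝ)⁻¹^3 * 1)) := hplx
    exact key ((1)*n0 + (1)*m2 + (-1)*n2) ((1)*m0 + (1)*n0 + (-1)*m2) (1) (0) (by decide) (by decide) (by
      push_cast
      linear_combination hplx - ((0) + (1)*gold)*hx0 - ((0) + (0)*gold)*hx1 - ((1) + (-1)*gold)*hx2 - (((1)*(n0:ℝ) + (-1)*(n2:ℝ))/2)*gold_sq')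
  · replace hplx : ((0) + (-1)*gold) * x 0 + ((0) + (0)*gold) * x 1 + ((-1) + (1)*gold) * x 2
        = gold + (((0) + (-1)*gold) * ((10:ℝ)⁻¹^3 * 1) + ((0) + (0)*gold) * ((10:ℝ)⁻¹^3 * 1) + ((-1) + (1)*gold) * ((10:ℝ)⁻¹^3 * 1)) := hplx
    exact key ((-1)*n0 + (-1)*m2 + (1)*n2) ((-1)*m0 + (-1)*n0 + (1)*m2) (-1) (0) (by decide) (by decide) (by
      push_cast
      linear_combination hplx - ((0) + (-1)*gold)*hx0 - ((0) + (0)*gold)*hx1 - ((-1) + (1)*gold)*hx2 - (((-1)*(n0:ℝ) + (1)*(n2:ℝ))/2)*gold_sq')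
  · replace hplx : ((0) + (-1)*gold) * x 0 + ((0) + (0)*gold) * x 1 + ((1) + (-1)*gold) * x 2
        = gold + (((0) + (-1)*gold) * ((10:ℝ)⁻¹^3 * 1) + ((0) + (0)*gold) * ((10:ℝ)⁻¹^3 * 1) + ((1) + (-1)*gold) * ((10:ℝ)⁻¹^3 * 1)) := hplx
    exact key ((-1)*n0 + (1)*m2 + (-1)*n2) ((-1)*m0 + (-1)*n0 + (-1)*m2) (1) (-2) (by decide) (by decide) (by
      push_cast
      linear_combination hplx - ((0) + (-1)*gold)*hx0 - ((0) + (0)*gold)*hx1 - ((1) + (-1)*gold)*hx2 - (((-1)*(n0:ℝ) + (-1)*(n2:ℝ))/2)*gold_sq')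

end
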